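/- arXiv:1704.02137 — 5 statements merged into one kernel-verified Lean document; each statement's English description precedes it below -/
import Mathlib

section
/- Let X₁,…,Xₙ be independent real-valued random variables whose distribution functions are all long-tailed. Then P(max_{1≤k≤n} (X₁+⋯+X_k) > x) ∼ P(X₁+⋯+Xₙ > x) as x → ∞. -/
/-!
A sum of independent long-tailed variables is long-tailed: cutting the half-plane
`{u + v > x}` at a fixed level of `v`, the part below the cut inherits insensitivity to shifts
from the first summand and the part above it from the second.

For the maximum, split `{max_k S_k > x}` according to the first index `k` with `S_k > x`. That
event depends on `X_1, …, X_k` only, hence is independent of `{S_n - S_k > -a}`, whose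
probability is close to `1` uniformly in `k` once `a` is large. This gives
`(1 - ε) P(max_k S_k > x) ≤ P(S_n > x - a) ∼ P(S_n > x)`, and `P(S_n > x) ≤ P(max_k S_k > x)`
is trivial.
-/

open Filter MeasureTheory ProbabilityTheory Set
open scoped ENNReal Topology

lemma ENNReal.ofReal_mul_le_iff {c : ℝ} {p q : ℝ≥0∞} (hp : p ≠ ∞) (hq : q ≠ ∞) :
    ENNReal.ofReal c * p ≤ q ↔ c * p.toReal ≤ q.toReal := by
  rw [← ENNReal.ofReal_toReal hp, ← ENNReal.ofReal_mul' ENNReal.toReal_nonneg,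
    ENNReal.ofReal_le_iff_le_toReal hq, ENNReal.toReal_ofReal ENNReal.toReal_nonneg]

lemma tendsto_toReal_div_toReal_nhds_one {α : Type*} {l : Filter α} {f g : α → ℝ≥0∞}
    (hg0 : ∀ x, g x ≠ 0) (hg : ∀ x, g x ≠ ∞) (hfg : ∀ x, f x ≤ g x)
    (h : ∀ c ∈ Ioo (0 : ℝ) 1, ∀ᶠ x in l, ENNReal.ofReal c * g x ≤ f x) :
    Tendsto (fun x => (f x).toReal / (g x).toReal) l (𝓝 1) := by
  have hg_pos x : 0 < (g x).toReal := ENNReal.toReal_pos (hg0 x) (hg x)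
  refine tendsto_order.2 ⟨fun b hb => ?_, fun b hb => .of_forall fun x => ?_⟩
  · obtain ⟨c, hbc, hc1⟩ := exists_between (max_lt hb one_half_lt_one)
    filter_upwards [h c ⟨by linarith [le_max_right b (1 / 2)], hc1⟩] with x hx
    rw [lt_div_iff₀ (hg_pos x)]
    calc b * (g x).toReal < c * (g x).toReal :=
          mul_lt_mul_of_pos_right ((le_max_left _ _).trans_lt hbc) (hg_pos x)
      _ ≤ (f x).toReal :=
          (ENNReal.ofReal_mul_le_iff (hg x) (ne_top_of_le_ne_top (hg x) (hfg x))).1 hx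
  · calc (f x).toReal / (g x).toReal ≤ 1 :=
          div_le_one_of_le₀ (ENNReal.toReal_mono (hg x) (hfg x)) (hg_pos x).le
      _ < b := hb

def IsLongTailed (ν : Measure ℝ) : Prop :=
  (∀ x, ν (Ioi x) ≠ 0) ∧
    ∀ a, Tendsto (fun x => (ν (Ioi (x + a))).toReal / (ν (Ioi x)).toReal) atTop (𝓝 1)

namespace IsLongTailed

variable {ν : Measure ℝ} [IsFiniteMeasure ν]

lemma eventually_ofReal_mul_le (h : IsLongTailed ν) (a : ℝ) {c : ℝ} (hc : c < 1) :
    ∀ᶠ x in atTop, ENNReal.ofReal c * ν (Ioi x) ≤ ν (Ioi (x + a)) := by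
  filter_upwards [(h.2 a).eventually (eventually_gt_nhds hc)] with x hx
  rw [ENNReal.ofReal_mul_le_iff (measure_ne_top _ _) (measure_ne_top _ _)]
  exact (le_div_iff₀ (ENNReal.toReal_pos (h.1 x) (measure_ne_top _ _))).1 hx.le

lemma of_eventually_ofReal_mul_le (hpos : ∀ x, ν (Ioi x) ≠ 0)
    (h : ∀ a, 0 ≤ a → ∀ c < 1, ∀ᶠ x in atTop, ENNReal.ofReal c * ν (Ioi x) ≤ ν (Ioi (x + a))) :
    IsLongTailed ν := by
  refine ⟨hpos, fun a => ?_⟩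
  rcases le_total 0 a with ha | ha
  · exact tendsto_toReal_div_toReal_nhds_one hpos (fun _ => measure_ne_top _ _)
      (fun x => measure_mono (Ioi_subset_Ioi (by linarith))) fun c hc => h a ha c hc.2
  · have hshift := tendsto_atTop_add_const_right atTop a tendsto_id
    have := tendsto_toReal_div_toReal_nhds_one (l := atTop) (f := fun x => ν (Ioi x))
      (g := fun x => ν (Ioi (x + a))) (fun _ => hpos _) (fun _ => measure_ne_top _ _)
      (fun x => measure_mono (Ioi_subset_Ioi (by linarith))) fun c hc => by
        simpa using hshift.eventually (h (-a) (neg_nonneg.2 ha) c hc.2)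
    simpa using this.inv₀ one_ne_zero

end IsLongTailed

section Convolution

variable {ν₁ ν₂ : Measure ℝ}

lemma mul_measure_prod_add_gt_snd_le_le [SFinite ν₁] [SFinite ν₂] {y₀ a t x : ℝ} {c : ℝ≥0∞}
    (hx : y₀ ≤ x - t) (h : ∀ y ≥ y₀, c * ν₁ (Ioi y) ≤ ν₁ (Ioi (y + a))) :
    c * ν₁.prod ν₂ {p | x < p.1 + p.2 ∧ p.2 ≤ t} ≤
      ν₁.prod ν₂ {p | x + a < p.1 + p.2 ∧ p.2 ≤ t} := by
  have hmeas (z : ℝ) : MeasurableSet {p : ℝ × ℝ | z < p.1 + p.2 ∧ p.2 ≤ t} :=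
    (measurableSet_lt measurable_const (measurable_fst.add measurable_snd)).inter
      (measurableSet_le measurable_snd measurable_const)
  rw [Measure.prod_apply_symm (hmeas x), Measure.prod_apply_symm (hmeas (x + a))]
  refine (lintegral_const_mul_le _ _).trans (lintegral_mono fun v => ?_)
  by_cases hv : v ≤ t
  · have hsection (z : ℝ) :
        (fun u => (u, v)) ⁻¹' {p : ℝ × ℝ | z < p.1 + p.2 ∧ p.2 ≤ t} = Ioi (z - v) := by
      ext u
      simp [hv, sub_lt_iff_lt_add]
    rw [hsection, hsection, add_sub_right_comm]
    exact h _ (hx.trans (by linarith))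
  · simp [hv]

lemma mul_measure_prod_add_gt_snd_gt_le [SFinite ν₂] {y₀ a t x : ℝ} {c : ℝ≥0∞} (ha : 0 ≤ a)
    (ht : y₀ ≤ t) (h : ∀ y ≥ y₀, c * ν₂ (Ioi y) ≤ ν₂ (Ioi (y + a))) :
    c * ν₁.prod ν₂ {p | x < p.1 + p.2 ∧ t < p.2} ≤
      ν₁.prod ν₂ {p | x + a < p.1 + p.2 ∧ t < p.2} := by
  have hmeas (z : ℝ) : MeasurableSet {p : ℝ × ℝ | z < p.1 + p.2 ∧ t < p.2} :=
    (measurableSet_lt measurable_const (measurable_fst.add measurable_snd)).inter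
      (measurableSet_lt measurable_const measurable_snd)
  rw [Measure.prod_apply (hmeas x), Measure.prod_apply (hmeas (x + a))]
  refine (lintegral_const_mul_le _ _).trans (lintegral_mono fun u => ?_)
  have hsection (z : ℝ) :
      Prod.mk u ⁻¹' {p : ℝ × ℝ | z < p.1 + p.2 ∧ t < p.2} = Ioi (max (z - u) t) := by
    ext v
    simp [sub_lt_iff_lt_add']
  rw [hsection, hsection]
  calc c * ν₂ (Ioi (max (x - u) t)) ≤ ν₂ (Ioi (max (x - u) t + a)) :=
        h _ (ht.trans (le_max_right _ _))
    _ ≤ ν₂ (Ioi (max (x + a - u) t)) := measure_mono <| Ioi_subset_Ioi <|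
        max_le (by linarith [le_max_left (x - u) t]) (by linarith [le_max_right (x - u) t])

theorem IsLongTailed.conv [IsFiniteMeasure ν₁] [IsFiniteMeasure ν₂] (h₁ : IsLongTailed ν₁)
    (h₂ : IsLongTailed ν₂) : IsLongTailed (ν₁ ∗ ν₂) := by
  have hconv (x : ℝ) : (ν₁ ∗ ν₂) (Ioi x) = ν₁.prod ν₂ {p | x < p.1 + p.2} :=
    Measure.map_apply measurable_add measurableSet_Ioi
  have hsplit (x t : ℝ) : ν₁.prod ν₂ {p | x < p.1 + p.2} =
      ν₁.prod ν₂ {p | x < p.1 + p.2 ∧ p.2 ≤ t} + ν₁.prod ν₂ {p | x < p.1 + p.2 ∧ t < p.2} := by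
    rw [← measure_inter_add_sdiff _ (measurableSet_le measurable_snd measurable_const :
      MeasurableSet {p : ℝ × ℝ | p.2 ≤ t})]
    simp only [sdiff_eq, compl_ofPred, not_le]
    rfl
  refine .of_eventually_ofReal_mul_le (fun x => ?_) fun a ha c hc => ?_
  · rw [hconv, ← pos_iff_ne_zero]
    calc 0 < ν₁ (Ioi x) * ν₂ (Ioi 0) := ENNReal.mul_pos (h₁.1 x) (h₂.1 0)
      _ = ν₁.prod ν₂ (Ioi x ×ˢ Ioi 0) := (Measure.prod_prod _ _).symm
      _ ≤ _ := measure_mono fun p ⟨hp₁, hp₂⟩ =>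
        show x < p.1 + p.2 by linarith [mem_Ioi.1 hp₁, mem_Ioi.1 hp₂]
  obtain ⟨y₁, hy₁⟩ := eventually_atTop.1 (h₁.eventually_ofReal_mul_le a hc)
  obtain ⟨y₂, hy₂⟩ := eventually_atTop.1 (h₂.eventually_ofReal_mul_le a hc)
  filter_upwards [eventually_ge_atTop (y₁ + y₂)] with x hx
  rw [hconv, hconv, hsplit x y₂, hsplit (x + a) y₂, mul_add]
  exact add_le_add (mul_measure_prod_add_gt_snd_le_le (by linarith) hy₁)
    (mul_measure_prod_add_gt_snd_gt_le ha le_rfl hy₂)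

end Convolution

section Independent

variable {Ω ι : Type*} {mΩ : MeasurableSpace Ω} {μ : Measure Ω}

lemma ProbabilityTheory.IndepFun.isLongTailed_map_add [IsFiniteMeasure μ] {X Y : Ω → ℝ}
    (hX : Measurable X) (hY : Measurable Y) (hXY : IndepFun X Y μ)
    (h₁ : IsLongTailed (μ.map X)) (h₂ : IsLongTailed (μ.map Y)) :
    IsLongTailed (μ.map (X + Y)) := by
  rw [hXY.map_add_eq_map_conv_map hX hY]
  exact h₁.conv h₂

lemma ProbabilityTheory.iIndepFun.isLongTailed_map_sum [IsFiniteMeasure μ] {X : ι → Ω → ℝ}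
    (hX : ∀ i, Measurable (X i)) (hind : iIndepFun X μ) (h : ∀ i, IsLongTailed (μ.map (X i)))
    {s : Finset ι} (hs : s.Nonempty) : IsLongTailed (μ.map (∑ i ∈ s, X i)) := by
  induction hs using Finset.Nonempty.cons_induction with
  | singleton i => simpa using h i
  | cons i s hi hs ih =>
    rw [Finset.sum_cons]
    exact (hind.indepFun_finsetSum_of_notMem hX hi).symm.isLongTailed_map_add (hX i)
      (by fun_prop) (h i) ih

lemma measure_map_sum_Ioi {X : ι → Ω → ℝ} (hX : ∀ i, Measurable (X i)) (s : Finset ι) (x : ℝ) :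
    μ.map (∑ i ∈ s, X i) (Ioi x) = μ {ω | x < ∑ i ∈ s, X i ω} := by
  rw [Measure.map_apply (by fun_prop) measurableSet_Ioi]
  simp [preimage, Finset.sum_apply]

lemma exists_forall_le_measure_neg_lt [Finite ι] [IsProbabilityMeasure μ] (Y : ι → Ω → ℝ)
    {c : ℝ≥0∞} (hc : c < 1) : ∃ a : ℝ, ∀ i, c ≤ μ {ω | -a < Y i ω} := by
  have htendsto (i : ι) : Tendsto (fun a : ℝ => μ {ω | -a < Y i ω}) atTop (𝓝 1) := by
    have hmono : Monotone fun a : ℝ => {ω | -a < Y i ω} := fun a b hab ω (hω : -a < Y i ω) =>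
      show -b < Y i ω by linarith
    have hunion : ⋃ a : ℝ, {ω | -a < Y i ω} = univ :=
      eq_univ_of_forall fun ω => mem_iUnion.2 ⟨1 - Y i ω, by simp⟩
    simpa [hunion, Function.comp_def] using tendsto_measure_iUnion_atTop (μ := μ) hmono
  obtain ⟨a, ha⟩ :=
    (eventually_all.2 fun i => (htendsto i).eventually (eventually_gt_nhds hc)).exists
  exact ⟨a, fun i => (ha i).le⟩

lemma measurable_sum_iSup_comap (X : ι → Ω → ℝ) {s : Finset ι} {T : Set ι} (hsT : ↑s ⊆ T) :
    Measurable[⨆ j ∈ T, MeasurableSpace.comap (X j) inferInstance] fun ω => ∑ j ∈ s, X j ω :=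
  Finset.measurable_sum s fun j hj => (comap_measurable (X j)).mono
    (le_iSup₂ (f := fun j (_ : j ∈ T) => MeasurableSpace.comap (X j) inferInstance) j (hsT hj))
    le_rfl

section MaximalInequality

variable [LinearOrder ι] [Fintype ι] [LocallyFiniteOrderBot ι] {X : ι → Ω → ℝ}

theorem ProbabilityTheory.iIndepFun.mul_measure_exists_sum_Iic_gt_le
    (hX : ∀ i, Measurable (X i)) (hind : iIndepFun X μ) {a : ℝ} {c : ℝ≥0∞}
    (hc : ∀ i, c ≤ μ {ω | -a < ∑ j ∈ (Finset.Iic i)ᶜ, X j ω}) (x : ℝ) :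
    c * μ {ω | ∃ i, x < ∑ j ∈ Finset.Iic i, X j ω} ≤ μ {ω | x - a < ∑ i, X i ω} := by
  set m : ι → MeasurableSpace Ω := fun i => MeasurableSpace.comap (X i) inferInstance
  have hm_le (i : ι) : m i ≤ mΩ := (hX i).comap_le
  set E : ι → Set Ω := fun i => {ω | x < ∑ j ∈ Finset.Iic i, X j ω}
  set B : ι → Set Ω := fun i => {ω | -a < ∑ j ∈ (Finset.Iic i)ᶜ, X j ω}
  -- `disjointed E i` is the event that the partial sums first exceed `x` at `i`.
  have hA (i : ι) : MeasurableSet[⨆ j ∈ (Finset.Iic i : Set ι), m j] (disjointed E i) := by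
    rw [disjointed_eq_inter_compl]
    refine (measurableSet_lt measurable_const (measurable_sum_iSup_comap X subset_rfl)).inter
      (MeasurableSet.iInter fun j => MeasurableSet.iInter fun hj =>
        (measurableSet_lt measurable_const (measurable_sum_iSup_comap X ?_)).compl)
    simpa using Iic_subset_Iic.2 hj.le
  have hB (i : ι) : MeasurableSet[⨆ j ∈ (Finset.Iic i : Set ι)ᶜ, m j] (B i) :=
    measurableSet_lt measurable_const (measurable_sum_iSup_comap X (by simp))
  have hmeas_le (T : Set ι) : ⨆ j ∈ T, m j ≤ mΩ := iSup₂_le fun j _ => hm_le j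
  have hAB (i : ι) : μ (disjointed E i ∩ B i) = μ (disjointed E i) * μ (B i) :=
    (Indep_iff _ _ μ).1 (indep_iSup_of_disjoint hm_le ((iIndepFun_iff_iIndep _ _ _).1 hind)
      disjoint_compl_right) _ _ (hA i) (hB i)
  have hmeasA (i : ι) : MeasurableSet (disjointed E i) := hmeas_le _ _ (hA i)
  have hmeasB (i : ι) : MeasurableSet (B i) := hmeas_le _ _ (hB i)
  calc c * μ {ω | ∃ i, x < ∑ j ∈ Finset.Iic i, X j ω} = ∑ i, c * μ (disjointed E i) := by
        rw [ofPred_exists, ← iUnion_disjointed, measure_iUnion (disjoint_disjointed E) hmeasA,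
          tsum_fintype, Finset.mul_sum]
    _ ≤ ∑ i, μ (disjointed E i ∩ B i) := Finset.sum_le_sum fun i _ => by
        rw [hAB, mul_comm]
        gcongr
        exact hc i
    _ = μ (⋃ i, disjointed E i ∩ B i) := by
        rw [measure_iUnion ((disjoint_disjointed E).mono fun i j h =>
          h.mono inter_subset_left inter_subset_left) fun i => (hmeasA i).inter (hmeasB i),
          tsum_fintype]
    _ ≤ μ {ω | x - a < ∑ i, X i ω} := measure_mono <| iUnion_subset fun i ω ⟨hωA, hωB⟩ => by
        have hωE : ω ∈ E i := disjointed_subset E i hωA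
        simp only [mem_ofPred_eq, E, B] at hωE hωB ⊢
        rw [← Finset.sum_add_sum_compl (Finset.Iic i)]
        linarith

variable [IsProbabilityMeasure μ]

lemma ProbabilityTheory.iIndepFun.eventually_ofReal_mul_measure_exists_sum_Iic_gt_le
    (hX : ∀ i, Measurable (X i)) (hind : iIndepFun X μ) (hS : IsLongTailed (μ.map (∑ i, X i)))
    {c : ℝ} (hc : c ∈ Ioo 0 1) :
    ∀ᶠ x in atTop,
      ENNReal.ofReal c * μ {ω | ∃ i, x < ∑ j ∈ Finset.Iic i, X j ω} ≤ μ {ω | x < ∑ i, X i ω} := by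
  have hr : √c < 1 := by simpa using Real.sqrt_lt_sqrt hc.1.le hc.2
  obtain ⟨a, ha⟩ := exists_forall_le_measure_neg_lt (μ := μ)
    (fun i ω => ∑ j ∈ (Finset.Iic i)ᶜ, X j ω) (ENNReal.ofReal_lt_one.2 hr)
  filter_upwards [(tendsto_atTop_add_const_right atTop (-a) tendsto_id).eventually
    (hS.eventually_ofReal_mul_le a hr)] with x hx
  rw [measure_map_sum_Ioi hX, measure_map_sum_Ioi hX, neg_add_cancel_right, ← sub_eq_add_neg] at hx
  calc ENNReal.ofReal c * μ {ω | ∃ i, x < ∑ j ∈ Finset.Iic i, X j ω}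
      = ENNReal.ofReal √c * (ENNReal.ofReal √c * μ {ω | ∃ i, x < ∑ j ∈ Finset.Iic i, X j ω}) := by
        rw [← mul_assoc, ← ENNReal.ofReal_mul (Real.sqrt_nonneg _), Real.mul_self_sqrt hc.1.le]
    _ ≤ ENNReal.ofReal √c * μ {ω | x - a < ∑ i, X i ω} := by
        gcongr
        exact hind.mul_measure_exists_sum_Iic_gt_le hX ha x
    _ ≤ μ {ω | x < ∑ i, X i ω} := hx

theorem ProbabilityTheory.iIndepFun.tendsto_measure_exists_sum_Iic_gt_div_measure_sum_gt
    [Nonempty ι] (hX : ∀ i, Measurable (X i)) (hind : iIndepFun X μ)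
    (h : ∀ i, IsLongTailed (μ.map (X i))) :
    Tendsto (fun x => (μ {ω | ∃ i, x < ∑ j ∈ Finset.Iic i, X j ω}).toReal /
      (μ {ω | x < ∑ i, X i ω}).toReal) atTop (𝓝 1) := by
  have hS := hind.isLongTailed_map_sum hX h Finset.univ_nonempty
  have hS0 (x : ℝ) : μ {ω | x < ∑ i, X i ω} ≠ 0 := measure_map_sum_Ioi hX _ x ▸ hS.1 x
  obtain ⟨t, ht⟩ := Finite.exists_max (id : ι → ι)
  have hIic : Finset.Iic t = Finset.univ :=
    Finset.eq_univ_of_forall fun j => Finset.mem_Iic.2 (ht j)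
  have hle (x : ℝ) :
      μ {ω | x < ∑ i, X i ω} ≤ μ {ω | ∃ i, x < ∑ j ∈ Finset.Iic i, X j ω} :=
    measure_mono fun ω hω => ⟨t, by rwa [hIic]⟩
  have := tendsto_toReal_div_toReal_nhds_one (l := atTop)
    (fun x => ((hS0 x).bot_lt.trans_le (hle x)).ne') (fun _ => measure_ne_top _ _) hle
    fun c hc => hind.eventually_ofReal_mul_measure_exists_sum_Iic_gt_le hX hS hc
  simpa using this.inv₀ one_ne_zero

end MaximalInequality

end Independent

lemma Fin.exists_mem_Icc_lt_sum_filter_lt_iff {n : ℕ} (f : Fin n → ℝ) (x : ℝ) :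
    (∃ k ∈ Finset.Icc 1 n, x < ∑ i ∈ Finset.univ.filter (fun i : Fin n => (i : ℕ) < k), f i) ↔
      ∃ i : Fin n, x < ∑ j ∈ Finset.Iic i, f j := by
  have hIic (i : Fin n) :
      Finset.univ.filter (fun j : Fin n => (j : ℕ) < (i : ℕ) + 1) = Finset.Iic i :=
    Finset.ext fun j => by
      simp only [Finset.mem_filter, Finset.mem_univ, true_and, Finset.mem_Iic, Fin.le_def]
      omega
  constructor
  · rintro ⟨k, hk, hx⟩
    obtain ⟨hk₁, hkn⟩ := Finset.mem_Icc.1 hk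
    refine ⟨⟨k - 1, by omega⟩, ?_⟩
    rwa [← hIic, Nat.sub_add_cancel hk₁]
  · rintro ⟨i, hx⟩
    exact ⟨(i : ℕ) + 1, Finset.mem_Icc.2 ⟨by omega, i.isLt⟩, by rwa [hIic]⟩

/-- For independent real-valued random variables with long-tailed distribution functions,
`P(max_{1≤k≤n} S_k > x) ∼ P(S_n > x)` as `x → ∞`. -/
theorem max_partial_sums_tail_asymp
    {Ω : Type*} [MeasurableSpace Ω] (μ : Measure Ω) [IsProbabilityMeasure μ]
    (n : ℕ) (hn : 1 ≤ n) (X : Fin n → Ω → ℝ) (hmeas : ∀ i, Measurable (X i))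
    (hindep : iIndepFun X μ)
    (hpos : ∀ i, ∀ x : ℝ, 0 < (μ {ω | X i ω > x}).toReal)
    (hlong : ∀ i, ∀ a : ℝ,
      Tendsto (fun x : ℝ => (μ {ω | X i ω > x + a}).toReal / (μ {ω | X i ω > x}).toReal)
        atTop (nhds 1)) :
    Tendsto (fun x : ℝ =>
        (μ {ω | (Finset.Icc 1 n).sup' (Finset.nonempty_Icc.mpr hn)
            (fun k => ∑ i ∈ Finset.univ.filter (fun i : Fin n => (i : ℕ) < k), X i ω) > x}).toReal
          / (μ {ω | (∑ i, X i ω) > x}).toReal) atTop (nhds 1) := by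
  have hmap (i : Fin n) (x : ℝ) : μ.map (X i) (Ioi x) = μ {ω | X i ω > x} :=
    Measure.map_apply (hmeas i) measurableSet_Ioi
  have hX (i : Fin n) : IsLongTailed (μ.map (X i)) :=
    ⟨fun x => hmap i x ▸ (ENNReal.toReal_pos_iff.1 (hpos i x)).1.ne',
      fun a => by simpa only [hmap] using hlong i a⟩
  have : Nonempty (Fin n) := ⟨⟨0, hn⟩⟩
  simpa only [gt_iff_lt, Finset.lt_sup'_iff, Fin.exists_mem_Icc_lt_sum_filter_lt_iff] using
    hindep.tendsto_measure_exists_sum_Iic_gt_div_measure_sum_gt hmeas hX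
end

section
/- Let X₁,…,Xₙ be independent real-valued random variables. If the distribution function of X₁ has a consistently varying tail, and for each k ∈ {2,…,n} either the distribution function of X_k has a consistently varying tail or P(X_k > x) = o(P(X₁ > x)), then the distribution function of the sum Σₙ = X₁+⋯+Xₙ has a consistently varying tail. -/
open Filter MeasureTheory ProbabilityTheory

/-- `T` is a consistently varying tail function: `lim_{y↑1} limsup_{x→∞} T(xy)/T(x) = 1`. -/
def ConsistentlyVaryingTail (T : ℝ → ℝ) : Prop :=
  Tendsto (fun y : ℝ => limsup (fun x : ℝ => T (x * y) / T x) atTop)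
    (nhdsWithin 1 (Set.Iio 1)) (nhds 1)

open Set
open scoped ENNReal

set_option linter.unusedVariables false
set_option linter.unusedSectionVars false

namespace CVarAux

/-- eventual-bound reformulation of the consistently-varying property -/
def CVTB (T : ℝ → ℝ) : Prop :=
  ∀ ε : ℝ, 0 < ε → ∃ y₀ ∈ Set.Ioo (0:ℝ) 1, ∀ y ∈ Set.Ioo y₀ 1,
    ∀ᶠ x in atTop, T (x * y) ≤ (1 + ε) * T x

lemma limsup_bounds {f : ℝ → ℝ} {b : ℝ}
    (h1 : ∀ᶠ x in atTop, 1 ≤ f x) (h2 : ∀ᶠ x in atTop, f x ≤ b) :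
    1 ≤ limsup f atTop ∧ limsup f atTop ≤ b := by
  rw [Filter.limsup_eq]
  have hmem : ∀ a ∈ {a : ℝ | ∀ᶠ x in atTop, f x ≤ a}, 1 ≤ a := by
    intro a ha
    obtain ⟨x, hx1, hx2⟩ := (h1.and ha).exists
    linarith
  refine ⟨le_csInf ⟨b, h2⟩ hmem, csInf_le ⟨1, hmem⟩ h2⟩

lemma eventually_le_of_limsup_lt {f : ℝ → ℝ} {c : ℝ}
    (hlt : limsup f atTop < c) (hpos : 0 < limsup f atTop) :
    ∀ᶠ x in atTop, f x ≤ c := by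
  rw [Filter.limsup_eq] at hlt hpos
  have hne : {a : ℝ | ∀ᶠ x in atTop, f x ≤ a}.Nonempty := by
    by_contra h
    rw [Set.not_nonempty_iff_eq_empty] at h
    rw [h, Real.sInf_empty] at hpos
    exact lt_irrefl 0 hpos
  obtain ⟨a, ha, hac⟩ := exists_lt_of_csInf_lt hne hlt
  exact ha.mono fun x hx => le_trans hx hac.le

lemma cvt_to_cvtb {T : ℝ → ℝ} (hT : ConsistentlyVaryingTail T)
    (hanti : Antitone T) (hpos : ∀ x, 0 < T x) : CVTB T := by
  intro ε hε
  have hball : Metric.ball (1:ℝ) (min (ε/2) (1/2)) ∈ nhds (1:ℝ) :=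
    Metric.ball_mem_nhds _ (by positivity)
  have h := hT hball
  rw [mem_map, mem_nhdsLT_iff_exists_Ioo_subset] at h
  obtain ⟨y₀, hy₀, hsub⟩ := h
  refine ⟨max y₀ (1/2), ⟨by positivity, max_lt hy₀ (by norm_num)⟩, ?_⟩
  intro y hy
  have hy1 : y ∈ Set.Ioo y₀ 1 := ⟨lt_of_le_of_lt (le_max_left _ _) hy.1, hy.2⟩
  have hy05 : (1/2:ℝ) < y := lt_of_le_of_lt (le_max_right _ _) hy.1
  have hmem := hsub hy1
  rw [Set.mem_preimage, Metric.mem_ball, Real.dist_eq] at hmem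
  have habs := abs_lt.mp hmem
  have hlt : limsup (fun x : ℝ => T (x * y) / T x) atTop < 1 + ε/2 := by
    have := habs.2; have := min_le_left (ε/2) (1/2); linarith
  have hgt : 0 < limsup (fun x : ℝ => T (x * y) / T x) atTop := by
    have := habs.1; have := min_le_right (ε/2) (1/2); linarith
  have hev := eventually_le_of_limsup_lt hlt hgt
  filter_upwards [hev, eventually_ge_atTop (0:ℝ)] with x hx hx0
  have hTx : 0 < T x := hpos x
  have : T (x * y) / T x ≤ 1 + ε/2 := hx
  calc T (x * y) = (T (x * y) / T x) * T x := by field_simp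
    _ ≤ (1 + ε/2) * T x := by nlinarith [hTx]
    _ ≤ (1 + ε) * T x := by nlinarith [hTx]

lemma cvtb_to_cvt {T : ℝ → ℝ} (hT : CVTB T)
    (hanti : Antitone T) (hpos : ∀ x, 0 < T x) : ConsistentlyVaryingTail T := by
  rw [ConsistentlyVaryingTail, Metric.tendsto_nhdsWithin_nhds]
  intro ε hε
  set ε' := min (ε/2) (1/2) with hε'def
  have hε' : 0 < ε' := by positivity
  obtain ⟨y₀, hy₀, hbound⟩ := hT ε' hε'
  refine ⟨1 - y₀, by linarith [hy₀.2], ?_⟩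
  intro y hy hdist
  rw [Real.dist_eq] at hdist
  have hy1 : y < 1 := hy
  have hyy₀ : y₀ < y := by
    rw [abs_lt] at hdist; simp only [Set.mem_Iio] at hy; linarith [hdist.1]
  have hev := hbound y ⟨hyy₀, hy1⟩
  have hylow : ∀ᶠ x in atTop, (1:ℝ) ≤ T (x * y) / T x := by
    filter_upwards [eventually_ge_atTop (0:ℝ)] with x hx0
    have h1 : x * y ≤ x := by nlinarith
    have := hanti h1
    rw [le_div_iff₀ (hpos x)]
    linarith
  have hyup : ∀ᶠ x in atTop, T (x * y) / T x ≤ 1 + ε' := by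
    filter_upwards [hev] with x hx
    rw [div_le_iff₀ (hpos x)]; linarith [hx]
  obtain ⟨hl, hu⟩ := limsup_bounds hylow hyup
  rw [Real.dist_eq, abs_lt]
  constructor <;> [skip; skip]
  · linarith
  · have : ε' ≤ ε/2 := min_le_left _ _
    linarith

lemma cvtb_add {f g : ℝ → ℝ} (hf : CVTB f) (hg : CVTB g) :
    CVTB (fun x => f x + g x) := by
  intro ε hε
  obtain ⟨y₁, hy₁, h₁⟩ := hf ε hε
  obtain ⟨y₂, hy₂, h₂⟩ := hg ε hε
  refine ⟨max y₁ y₂, ⟨lt_max_of_lt_left hy₁.1, max_lt hy₁.2 hy₂.2⟩, ?_⟩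
  intro y hy
  have := h₁ y ⟨lt_of_le_of_lt (le_max_left _ _) hy.1, hy.2⟩
  have := h₂ y ⟨lt_of_le_of_lt (le_max_right _ _) hy.1, hy.2⟩
  filter_upwards [h₁ y ⟨lt_of_le_of_lt (le_max_left _ _) hy.1, hy.2⟩,
    h₂ y ⟨lt_of_le_of_lt (le_max_right _ _) hy.1, hy.2⟩] with x hx1 hx2
  show f (x*y) + g (x*y) ≤ (1+ε) * (f x + g x)
  linarith

lemma cvtb_sum {ι : Type*} (s : Finset ι) (f : ι → ℝ → ℝ)
    (h : ∀ i ∈ s, CVTB (f i)) : CVTB (fun x => ∑ i ∈ s, f i x) := by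
  classical
  induction s using Finset.induction_on with
  | empty =>
      intro ε hε
      refine ⟨1/2, by norm_num, fun y hy => ?_⟩
      filter_upwards with x; simp
  | @insert j t hj ih =>
      have h1 : CVTB (f j) := h j (Finset.mem_insert_self _ _)
      have h2 : CVTB (fun x => ∑ i ∈ t, f i x) := ih fun i hi => h i (Finset.mem_insert_of_mem hi)
      have := cvtb_add h1 h2
      intro ε hε
      obtain ⟨y₀, hy₀, hb⟩ := this ε hε
      refine ⟨y₀, hy₀, fun y hy => ?_⟩
      filter_upwards [hb y hy] with x hx
      simpa [Finset.sum_insert hj] using hx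

/-- long-tailedness from the consistently varying property -/
lemma cvtb_long {T : ℝ → ℝ} (hT : CVTB T) (hanti : Antitone T) (A : ℝ) {ε : ℝ} (hε : 0 < ε) :
    ∀ᶠ x in atTop, T (x - A) ≤ (1 + ε) * T x := by
  obtain ⟨y₀, hy₀, hb⟩ := hT ε hε
  set y := (1 + y₀)/2 with hydef
  have hy : y ∈ Set.Ioo y₀ 1 := ⟨by simp [hydef]; linarith [hy₀.2], by simp [hydef]; linarith [hy₀.2]⟩
  have h1y : 0 < 1 - y := by linarith [hy.2]
  filter_upwards [hb y hy, eventually_ge_atTop (max (A / (1 - y)) 0)] with x hx hx2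
  have hx0 : 0 ≤ x := le_trans (le_max_right _ _) hx2
  have hxA : A / (1 - y) ≤ x := le_trans (le_max_left _ _) hx2
  have : A ≤ x * (1 - y) := by
    rw [div_le_iff₀ h1y] at hxA; linarith
  have hmono : x * y ≤ x - A := by nlinarith
  exact le_trans (hanti hmono) hx

/-- dominated-variation-type bound at a small scale -/
lemma cvtb_dom {T : ℝ → ℝ} (hT : CVTB T) (hanti : Antitone T) {δ₀ : ℝ} (hδ₀ : δ₀ ∈ Set.Ioo (0:ℝ) 1) :
    ∃ δ ∈ Set.Ioo (0:ℝ) δ₀, ∃ K : ℝ, 0 < K ∧ ∀ᶠ x in atTop, T (x * δ) ≤ K * T x := by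
  obtain ⟨y₀, hy₀, hb⟩ := hT 1 one_pos
  set y := (1 + y₀)/2 with hydef
  have hy : y ∈ Set.Ioo y₀ 1 := ⟨by simp [hydef]; linarith [hy₀.2], by simp [hydef]; linarith [hy₀.2]⟩
  have hy0 : 0 < y := lt_trans hy₀.1 hy.1
  have hbase := hb y hy
  obtain ⟨m, hm⟩ := exists_pow_lt_of_lt_one hδ₀.1 hy.2
  have hiter : ∀ k : ℕ, ∀ᶠ x in atTop, T (x * y ^ k) ≤ 2 ^ k * T x := by
    intro k
    induction k with
    | zero => filter_upwards with x; simp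
    | succ k ih =>
        rw [eventually_atTop] at hbase
        obtain ⟨x₁, hx₁⟩ := hbase
        have hyk : (0:ℝ) < y ^ k := pow_pos hy0 k
        have htend : Tendsto (fun x : ℝ => x * y ^ k) atTop atTop :=
          Tendsto.atTop_mul_const hyk tendsto_id
        filter_upwards [ih, htend.eventually (eventually_ge_atTop x₁)] with x hx hx2
        have h1 : T ((x * y ^ k) * y) ≤ 2 * T (x * y ^ k) := by
          have := hx₁ (x * y ^ k) hx2; linarith
        have heq : x * y ^ (k + 1) = (x * y ^ k) * y := by ring
        rw [heq]
        calc T ((x * y ^ k) * y) ≤ 2 * T (x * y ^ k) := h1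
          _ ≤ 2 * (2 ^ k * T x) := by
              have h2 : (0:ℝ) < 2 := by norm_num
              nlinarith [hx]
          _ = 2 ^ (k + 1) * T x := by ring
  refine ⟨y ^ (m+1), ⟨pow_pos hy0 _, ?_⟩, 2 ^ (m+1), by positivity, hiter (m+1)⟩
  calc y ^ (m+1) ≤ y ^ m := pow_le_pow_of_le_one hy0.le hy.2.le (by omega)
    _ < δ₀ := hm


lemma tail_anti {Ω : Type*} [MeasurableSpace Ω] {μ : Measure Ω} [IsFiniteMeasure μ] {Z : Ω → ℝ} : Antitone (fun x => (μ {ω | Z ω > x}).toReal) := by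
  intro a b hab
  apply ENNReal.toReal_mono (measure_ne_top _ _)
  apply measure_mono
  intro ω hω
  exact lt_of_le_of_lt hab hω

lemma tail_le_one {Ω : Type*} [MeasurableSpace Ω] {μ : Measure Ω} [IsProbabilityMeasure μ] {Z : Ω → ℝ} (x : ℝ) : (μ {ω | Z ω > x}).toReal ≤ 1 := by
  rw [← ENNReal.toReal_one]
  exact ENNReal.toReal_mono ENNReal.one_ne_top (prob_le_one)

lemma tail_tendsto_zero {Ω : Type*} [MeasurableSpace Ω] {μ : Measure Ω} [IsProbabilityMeasure μ] {Z : Ω → ℝ} (hZ : Measurable Z) :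
    Tendsto (fun x => (μ {ω | Z ω > x}).toReal) atTop (nhds 0) := by
  have hset : ∀ x : ℝ, {ω | Z ω > x} = Z ⁻¹' (Set.Ioi x) := fun x => rfl
  have hmap : ∀ x : ℝ, μ {ω | Z ω > x} = (μ.map Z) (Set.Ioi x) := by
    intro x; rw [hset, Measure.map_apply hZ measurableSet_Ioi]
  have : IsProbabilityMeasure (μ.map Z) := Measure.isProbabilityMeasure_map hZ.aemeasurable
  have hIic := tendsto_measure_Iic_atTop (μ.map Z)
  rw [measure_univ] at hIic
  have hIoi : ∀ x : ℝ, (μ.map Z) (Set.Ioi x) = 1 - (μ.map Z) (Set.Iic x) := by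
    intro x
    rw [← Set.compl_Iic, measure_compl measurableSet_Iic (measure_ne_top _ _), measure_univ]
  have h2 : Tendsto (fun x => ((μ.map Z) (Set.Iic x)).toReal) atTop (nhds 1) := by
    rw [show (1:ℝ) = (1:ℝ≥0∞).toReal from rfl.symm]
    · exact (ENNReal.tendsto_toReal ENNReal.one_ne_top).comp hIic
  have h3 : ∀ x : ℝ, (μ {ω | Z ω > x}).toReal = 1 - ((μ.map Z) (Set.Iic x)).toReal := by
    intro x
    rw [hmap, hIoi, ENNReal.toReal_sub_of_le (prob_le_one) ENNReal.one_ne_top, ENNReal.toReal_one]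
  simp only [h3]
  have := h2.const_sub (1:ℝ)
  simpa using this

lemma tail_neg_large {Ω : Type*} [MeasurableSpace Ω] (μ : Measure Ω) [IsProbabilityMeasure μ] {Z : Ω → ℝ} (hZ : Measurable Z) {ε : ℝ} (hε : 0 < ε) :
    ∃ A : ℝ, 0 < A ∧ 1 - ε ≤ (μ {ω | Z ω > -A}).toReal := by
  have : IsProbabilityMeasure (μ.map Z) := Measure.isProbabilityMeasure_map hZ.aemeasurable
  have hIci := tendsto_measure_Ici_atBot (μ.map Z)
  rw [measure_univ] at hIci
  have h2 : Tendsto (fun t => ((μ.map Z) (Set.Ici t)).toReal) atBot (nhds 1) := by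
    rw [show (1:ℝ) = (1:ℝ≥0∞).toReal from rfl.symm]
    exact (ENNReal.tendsto_toReal ENNReal.one_ne_top).comp hIci
  have hev : ∀ᶠ t in atBot, 1 - ε < ((μ.map Z) (Set.Ici t)).toReal := by
    have := h2.eventually (eventually_gt_nhds (by linarith : 1 - ε < 1))
    exact this
  rw [eventually_atBot] at hev
  obtain ⟨t₀, ht₀⟩ := hev
  set t := min t₀ 0 - 1 with htdef
  have ht : 1 - ε < ((μ.map Z) (Set.Ici t)).toReal := ht₀ t (by
    have := min_le_left t₀ 0; rw [htdef]; linarith)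
  refine ⟨-(t) + 1, by have := min_le_right t₀ 0; rw [htdef]; linarith, ?_⟩
  have hsub : Z ⁻¹' (Set.Ici t) ⊆ {ω | Z ω > -(-(t)+1)} := by
    intro ω hω
    simp only [Set.mem_preimage, Set.mem_Ici] at hω
    simp only [Set.mem_setOf_eq]
    linarith
  have := ENNReal.toReal_mono (measure_ne_top μ _) (measure_mono hsub)
  rw [← Measure.map_apply hZ measurableSet_Ici] at this
  linarith

lemma indep_tail_prod {S Y : Ω → ℝ} (h : IndepFun S Y μ)
    {B C : Set ℝ} (hB : MeasurableSet B) (hC : MeasurableSet C) :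
    (μ (S ⁻¹' B ∩ Y ⁻¹' C)).toReal = (μ (S ⁻¹' B)).toReal * (μ (Y ⁻¹' C)).toReal := by
  rw [h.measure_inter_preimage_eq_mul B C hB hC, ENNReal.toReal_mul]


variable {Ω : Type*} [MeasurableSpace Ω] {μ : Measure Ω} [IsProbabilityMeasure μ]




variable {Ω : Type*} [MeasurableSpace Ω] {μ : Measure Ω} [IsProbabilityMeasure μ]



omit [IsProbabilityMeasure μ] in
lemma toReal_union_le [IsFiniteMeasure μ] (A B : Set Ω) :
    (μ (A ∪ B)).toReal ≤ (μ A).toReal + (μ B).toReal := by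
  rw [← ENNReal.toReal_add (measure_ne_top _ _) (measure_ne_top _ _)]
  exact ENNReal.toReal_mono (by finiteness) (measure_union_le A B)

set_option maxHeartbeats 1000000 in
/-- Convolution step, case where `Y` has a tail negligible w.r.t. `T1 ≤ U`. -/
lemma step_o {S Y : Ω → ℝ} (hS : Measurable S) (hY : Measurable Y)
    (hind : IndepFun S Y μ)
    {U T1 : ℝ → ℝ} (hUanti : Antitone U) (hUpos : ∀ x, 0 < U x) (hUcv : CVTB U)
    (hT1U : ∀ x, T1 x ≤ U x) (hT1pos : ∀ x, 0 < T1 x) (hT1anti : Antitone T1) (hT1cv : CVTB T1)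
    (hIH : ∀ ε : ℝ, 0 < ε → ∀ᶠ x in atTop,
      (1-ε) * U x ≤ (μ {ω | S ω > x}).toReal ∧ (μ {ω | S ω > x}).toReal ≤ (1+ε) * U x)
    (hsmall : Tendsto (fun x => (μ {ω | Y ω > x}).toReal / T1 x) atTop (nhds 0))
    (hYpos : ∀ x, 0 < (μ {ω | Y ω > x}).toReal) :
    ∀ ε : ℝ, 0 < ε → ∀ᶠ x in atTop,
      (1-ε) * U x ≤ (μ {ω | S ω + Y ω > x}).toReal ∧
      (μ {ω | S ω + Y ω > x}).toReal ≤ (1+ε) * U x := by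
  intro ε hε
  -- reduce to ε ≤ 1
  obtain ⟨η, hη, hη4, hη1⟩ : ∃ η : ℝ, 0 < η ∧ 4 * η ≤ ε ∧ 4 * η ≤ 1 :=
    ⟨min ε 1 / 4, by positivity, by linarith [min_le_left ε 1], by linarith [min_le_right ε 1]⟩
  obtain ⟨y₀, hy₀, hU⟩ := hUcv η hη
  obtain ⟨δ, hδ, K, hK, hdom⟩ := cvtb_dom hT1cv hT1anti (⟨by linarith [hy₀.2], by linarith [hy₀.1]⟩ :
    (1 - y₀) ∈ Set.Ioo (0:ℝ) 1)
  have hδ1 : 1 - δ ∈ Set.Ioo y₀ 1 := ⟨by linarith [hδ.2], by linarith [hδ.1]⟩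
  have hδpos : 0 < 1 - δ := lt_trans hy₀.1 hδ1.1
  -- upper bound pieces
  have htend1 : Tendsto (fun x : ℝ => x * (1 - δ)) atTop atTop :=
    Tendsto.atTop_mul_const hδpos tendsto_id
  have htendδ : Tendsto (fun x : ℝ => x * δ) atTop atTop :=
    Tendsto.atTop_mul_const hδ.1 tendsto_id
  have E1 : ∀ᶠ x in atTop, (μ {ω | S ω > x * (1-δ)}).toReal ≤ (1+η) * U (x * (1-δ)) :=
    (htend1.eventually (hIH η hη)).mono fun x hx => hx.2
  have E2 : ∀ᶠ x in atTop, U (x * (1-δ)) ≤ (1+η) * U x := hU (1-δ) hδ1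
  have E3 : ∀ᶠ x in atTop, (μ {ω | Y ω > x * δ}).toReal ≤ (η / K) * T1 (x * δ) := by
    have hev : ∀ᶠ z in atTop, (μ {ω | Y ω > z}).toReal / T1 z < η / K := by
      have := hsmall.eventually (eventually_lt_nhds (by positivity : (0:ℝ) < η / K))
      simpa using this
    filter_upwards [htendδ.eventually hev] with x hx
    have h1 := hT1pos (x * δ)
    rw [div_lt_iff₀ h1] at hx
    nlinarith
  have E4 : ∀ᶠ x in atTop, T1 (x * δ) ≤ K * T1 x := hdom
  -- lower bound pieces
  obtain ⟨A, hA, hYA⟩ := tail_neg_large μ hY hη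
  have htendA : Tendsto (fun x : ℝ => x + A) atTop atTop :=
    tendsto_atTop_add_const_right atTop A tendsto_id
  have L1 : ∀ᶠ x in atTop, (1-η) * U (x + A) ≤ (μ {ω | S ω > x + A}).toReal :=
    (htendA.eventually (hIH η hη)).mono fun x hx => hx.1
  have L2 : ∀ᶠ x in atTop, U x ≤ (1+η) * U (x + A) := by
    have := htendA.eventually (cvtb_long hUcv hUanti A hη)
    filter_upwards [this] with x hx
    simpa using hx
  filter_upwards [E1, E2, E3, E4, L1, L2] with x hE1 hE2 hE3 hE4 hL1 hL2
  have hUx := hUpos x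
  have hT1x := hT1pos x
  constructor
  · -- lower bound
    have hincl : ({ω | S ω > x + A} ∩ {ω | Y ω > -A}) ⊆ {ω | S ω + Y ω > x} := by
      intro ω ⟨h1, h2⟩
      simp only [Set.mem_setOf_eq] at *
      linarith
    have hprod : (μ ({ω | S ω > x + A} ∩ {ω | Y ω > -A})).toReal
        = (μ {ω | S ω > x + A}).toReal * (μ {ω | Y ω > -A}).toReal :=
      indep_tail_prod hind measurableSet_Ioi measurableSet_Ioi
    have hmono : (μ ({ω | S ω > x + A} ∩ {ω | Y ω > -A})).toReal
        ≤ (μ {ω | S ω + Y ω > x}).toReal :=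
      ENNReal.toReal_mono (measure_ne_top _ _) (measure_mono hincl)
    have hUA : 0 < U (x + A) := hUpos _
    have hTS : 0 ≤ (μ {ω | S ω > x + A}).toReal := ENNReal.toReal_nonneg
    have key : (1-η) * U (x+A) * (1-η) ≤ (μ {ω | S ω + Y ω > x}).toReal := by
      rw [hprod] at hmono
      calc (1-η) * U (x+A) * (1-η)
          ≤ (μ {ω | S ω > x + A}).toReal * (μ {ω | Y ω > -A}).toReal := by
            nlinarith [hUA]
        _ ≤ _ := hmono
    -- (1-η)² U(x+A) ≥ (1-ε) U x  given U x ≤ (1+η) U(x+A)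
    have h14 : 0 ≤ 1 - 4*η := by linarith
    have step1 : (1-ε) * U x ≤ (1 - 4*η) * U x := by nlinarith
    have step2 : (1 - 4*η) * U x ≤ (1 - 4*η) * ((1+η) * U (x+A)) := by nlinarith
    have step3 : (1 - 4*η) * ((1+η) * U (x+A)) ≤ (1-η) * U (x+A) * (1-η) := by
      nlinarith [mul_nonneg (by nlinarith : (0:ℝ) ≤ η + 5*η*η) hUA.le]
    linarith
  · -- upper bound
    have hincl : {ω | S ω + Y ω > x} ⊆ {ω | S ω > x * (1-δ)} ∪ {ω | Y ω > x * δ} := by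
      intro ω hω
      simp only [Set.mem_setOf_eq, Set.mem_union] at *
      by_contra h
      push_neg at h
      obtain ⟨h1, h2⟩ := h
      have : S ω + Y ω ≤ x * (1-δ) + x * δ := by linarith
      nlinarith
    have hub : (μ {ω | S ω + Y ω > x}).toReal
        ≤ (μ {ω | S ω > x * (1-δ)}).toReal + (μ {ω | Y ω > x * δ}).toReal :=
      le_trans (ENNReal.toReal_mono (by finiteness) (measure_mono hincl))
        (toReal_union_le _ _)
    have hT1xδ := hT1pos (x * δ)
    have : (μ {ω | Y ω > x * δ}).toReal ≤ η * T1 x := by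
      calc (μ {ω | Y ω > x * δ}).toReal ≤ (η / K) * T1 (x * δ) := hE3
        _ ≤ (η / K) * (K * T1 x) := by
            have : 0 ≤ η / K := by positivity
            nlinarith
        _ = η * T1 x := by field_simp
    have hU1 : 0 < U (x * (1-δ)) := hUpos _
    calc (μ {ω | S ω + Y ω > x}).toReal
        ≤ (1+η) * U (x * (1-δ)) + η * T1 x := by linarith
      _ ≤ (1+η) * ((1+η) * U x) + η * U x := by
          have a1 := mul_le_mul_of_nonneg_left hE2 (by linarith : (0:ℝ) ≤ 1+η)
          have a2 := mul_le_mul_of_nonneg_left (hT1U x) hη.le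
          linarith
      _ ≤ (1+ε) * U x := by
          have h3 : 3*η + η*η ≤ ε := by nlinarith
          nlinarith [mul_nonneg (sub_nonneg.mpr h3) hUx.le]



lemma lower_arith {ε η u uA s p : ℝ} (hη : 0 < η) (hη4 : 4*η ≤ ε) (hη1 : 4*η ≤ 1)
    (huA : 0 < uA) (hu : 0 < u) (hL2 : u ≤ (1+η)*uA) (hL1 : (1-η)*uA ≤ s)
    (hp : 1-η ≤ p) : (1-ε)*u ≤ s*p := by
  have h14 : 0 ≤ 1 - 4*η := by linarith
  have hs : 0 ≤ s := le_trans (by nlinarith) hL1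
  have step1 : (1-ε) * u ≤ (1 - 4*η) * u := by nlinarith
  have step2 : (1 - 4*η) * u ≤ (1 - 4*η) * ((1+η) * uA) := by nlinarith
  have step3 : (1 - 4*η) * ((1+η) * uA) ≤ ((1-η) * uA) * (1-η) := by
    nlinarith [mul_nonneg (by nlinarith : (0:ℝ) ≤ η + 5*η*η) huA.le]
  have step4 : ((1-η) * uA) * (1-η) ≤ s * p :=
    mul_le_mul hL1 hp (by linarith) hs
  linarith

lemma lower_arith2 {ε η t tA q : ℝ} (hη : 0 < η) (hη4 : 4*η ≤ ε) (hη1 : 4*η ≤ 1)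
    (ht : 0 ≤ t) (htA : 0 ≤ tA) (hL2Y : t ≤ (1+η)*tA) (hq : 1-2*η ≤ q) :
    (1-ε)*t ≤ q*tA := by
  have h14 : 0 ≤ 1 - 4*η := by linarith
  have step1 : (1-ε) * t ≤ (1 - 4*η) * t := by nlinarith
  have step2 : (1 - 4*η) * t ≤ (1 - 4*η) * ((1+η) * tA) := by nlinarith
  have step3 : (1 - 4*η) * ((1+η) * tA) ≤ (1 - 2*η) * tA := by
    nlinarith [mul_nonneg (by nlinarith : (0:ℝ) ≤ η + 4*η*η) htA]
  have step4 : (1 - 2*η) * tA ≤ q * tA := by nlinarith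
  linarith

lemma upper_arith {ε η u t a b c : ℝ} (hη : 0 < η) (hη4 : 4*η ≤ ε) (hη1 : 4*η ≤ 1)
    (hu : 0 < u) (ht : 0 ≤ t)
    (ha : a ≤ (1+η) * ((1+η) * u)) (hb : b ≤ (1+η) * t) (hc : c ≤ η * u) :
    a + b + c ≤ (1+ε) * (u + t) := by
  have h3 : 3*η + η*η ≤ ε := by nlinarith
  nlinarith [mul_nonneg (sub_nonneg.mpr h3) hu.le,
    mul_nonneg (by linarith : (0:ℝ) ≤ ε - η) ht]

lemma third_arith {η K u s ty : ℝ} (hη : 0 < η) (hK : 0 < K) (hu : 0 < u)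
    (hs : 0 ≤ s) (hty : 0 ≤ ty) (hs' : s ≤ (1+η) * (K * u)) (hty' : ty ≤ η / ((1+η) * K)) :
    s * ty ≤ η * u := by
  have h1 : s * ty ≤ ((1+η) * (K * u)) * (η / ((1+η) * K)) :=
    mul_le_mul hs' hty' hty (by positivity)
  have h2 : ((1+η) * (K * u)) * (η / ((1+η) * K)) = η * u := by
    field_simp
  linarith

set_option maxHeartbeats 1000000 in
/-- Convolution step, case where `Y` itself has a consistently varying tail. -/
lemma step_cv {S Y : Ω → ℝ} (hS : Measurable S) (hY : Measurable Y)
    (hind : IndepFun S Y μ)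
    {U : ℝ → ℝ} (hUanti : Antitone U) (hUpos : ∀ x, 0 < U x) (hUcv : CVTB U)
    (hU0 : Tendsto U atTop (nhds 0))
    (hYcv : CVTB (fun x => (μ {ω | Y ω > x}).toReal))
    (hIH : ∀ ε : ℝ, 0 < ε → ∀ᶠ x in atTop,
      (1-ε) * U x ≤ (μ {ω | S ω > x}).toReal ∧ (μ {ω | S ω > x}).toReal ≤ (1+ε) * U x) :
    ∀ ε : ℝ, 0 < ε → ∀ᶠ x in atTop,
      (1-ε) * (U x + (μ {ω | Y ω > x}).toReal) ≤ (μ {ω | S ω + Y ω > x}).toReal ∧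
      (μ {ω | S ω + Y ω > x}).toReal ≤ (1+ε) * (U x + (μ {ω | Y ω > x}).toReal) := by
  intro ε hε
  obtain ⟨η, hη, hη4, hη1⟩ : ∃ η : ℝ, 0 < η ∧ 4 * η ≤ ε ∧ 4 * η ≤ 1 :=
    ⟨min ε 1 / 4, by positivity, by linarith [min_le_left ε 1], by linarith [min_le_right ε 1]⟩
  set TY := fun x => (μ {ω | Y ω > x}).toReal with hTYdef
  have hTYanti : Antitone TY := tail_anti (μ := μ) (Z := Y)
  have hTY0 : Tendsto TY atTop (nhds 0) := tail_tendsto_zero hY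
  have hTYnn : ∀ x, 0 ≤ TY x := fun x => ENNReal.toReal_nonneg
  obtain ⟨y₁, hy₁, hUb⟩ := hUcv η hη
  obtain ⟨y₂, hy₂, hYb⟩ := hYcv η hη
  set y₀ := max y₁ y₂ with hy₀def
  have hy₀ : y₀ ∈ Set.Ioo (0:ℝ) 1 := ⟨lt_max_of_lt_left hy₁.1, max_lt hy₁.2 hy₂.2⟩
  obtain ⟨δ, hδ, K, hK, hdom⟩ := cvtb_dom hUcv hUanti (⟨by linarith [hy₀.2], by linarith [hy₀.1]⟩ :
    (1 - y₀) ∈ Set.Ioo (0:ℝ) 1)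
  have hδ1 : 1 - δ ∈ Set.Ioo y₀ 1 := ⟨by linarith [hδ.2], by linarith [hδ.1]⟩
  have hδpos : 0 < 1 - δ := lt_trans hy₀.1 hδ1.1
  have htend1 : Tendsto (fun x : ℝ => x * (1 - δ)) atTop atTop :=
    Tendsto.atTop_mul_const hδpos tendsto_id
  have htendδ : Tendsto (fun x : ℝ => x * δ) atTop atTop :=
    Tendsto.atTop_mul_const hδ.1 tendsto_id
  -- upper bound pieces
  have hE1 : ∀ᶠ x in atTop, (μ {ω | S ω > x * (1-δ)}).toReal ≤ (1+η) * U (x * (1-δ)) :=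
    (htend1.eventually (hIH η hη)).mono fun x hx => hx.2
  have hE2 : ∀ᶠ x in atTop, U (x * (1-δ)) ≤ (1+η) * U x :=
    hUb (1-δ) ⟨lt_of_le_of_lt (le_max_left _ _) hδ1.1, hδ1.2⟩
  have hE2Y : ∀ᶠ x in atTop, TY (x * (1-δ)) ≤ (1+η) * TY x :=
    hYb (1-δ) ⟨lt_of_le_of_lt (le_max_right _ _) hδ1.1, hδ1.2⟩
  have hE3 : ∀ᶠ x in atTop, U (x * δ) ≤ K * U x := hdom
  have hE4 : ∀ᶠ x in atTop, TY (x * δ) ≤ η / ((1+η) * K) := by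
    have hpos : (0:ℝ) < η / ((1+η) * K) := by positivity
    have := hTY0.eventually (eventually_le_nhds hpos)
    exact htendδ.eventually this
  have hE5 : ∀ᶠ x in atTop, (μ {ω | S ω > x * δ}).toReal ≤ (1+η) * U (x * δ) :=
    (htendδ.eventually (hIH η hη)).mono fun x hx => hx.2
  -- lower bound pieces
  obtain ⟨A₁, hA₁, hYA₁⟩ := tail_neg_large μ hY hη
  obtain ⟨A₂, hA₂, hSA₂⟩ := tail_neg_large μ hS hη
  set A := max A₁ A₂ with hAdef
  have hYA : 1 - η ≤ (μ {ω | Y ω > -A}).toReal := by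
    refine le_trans hYA₁ (tail_anti (μ := μ) (Z := Y) ?_)
    simp [hAdef]
  have hSA : 1 - η ≤ (μ {ω | S ω > -A}).toReal := by
    refine le_trans hSA₂ (tail_anti (μ := μ) (Z := S) ?_)
    simp [hAdef]
  have htendA : Tendsto (fun x : ℝ => x + A) atTop atTop :=
    tendsto_atTop_add_const_right atTop A tendsto_id
  have hL1 : ∀ᶠ x in atTop, (1-η) * U (x + A) ≤ (μ {ω | S ω > x + A}).toReal :=
    (htendA.eventually (hIH η hη)).mono fun x hx => hx.1
  have hL1' : ∀ᶠ x in atTop, (μ {ω | S ω > x + A}).toReal ≤ (1+η) * U (x + A) :=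
    (htendA.eventually (hIH η hη)).mono fun x hx => hx.2
  have hL2 : ∀ᶠ x in atTop, U x ≤ (1+η) * U (x + A) := by
    filter_upwards [htendA.eventually (cvtb_long hUcv hUanti A hη)] with x hx
    simpa using hx
  have hL2Y : ∀ᶠ x in atTop, TY x ≤ (1+η) * TY (x + A) := by
    filter_upwards [htendA.eventually (cvtb_long hYcv hTYanti A hη)] with x hx
    simpa using hx
  have hUsm : ∀ᶠ x in atTop, U (x + A) ≤ η / 2 := by
    have := hU0.eventually (eventually_le_nhds (by positivity : (0:ℝ) < η/2))
    exact htendA.eventually this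
  filter_upwards [hE1, hE2, hE2Y, hE3, hE4, hE5, hL1, hL1', hL2, hL2Y, hUsm,
    eventually_ge_atTop (0:ℝ)] with x hE1 hE2 hE2Y hE3 hE4 hE5 hL1 hL1' hL2 hL2Y hUsm hx0
  have hUx := hUpos x
  have hUA : 0 < U (x + A) := hUpos _
  have hTSA : (μ {ω | S ω > x + A}).toReal ≤ η := by
    have : (1+η) * U (x+A) ≤ (1+η) * (η/2) := by nlinarith
    have h2 : (1+η) * (η/2) ≤ η := by nlinarith
    linarith
  constructor
  · -- lower bound
    have hincl : ({ω | S ω > x + A} ∩ {ω | Y ω > -A}) ∪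
        ((S ⁻¹' Set.Ioc (-A) (x+A)) ∩ {ω | Y ω > x + A}) ⊆ {ω | S ω + Y ω > x} := by
      rintro ω (⟨h1, h2⟩ | ⟨h1, h2⟩)
      · simp only [Set.mem_setOf_eq] at *
        linarith [le_max_left A₁ A₂, hA₁]
      · simp only [Set.mem_preimage, Set.mem_Ioc, Set.mem_setOf_eq] at *
        have : 0 < A := lt_of_lt_of_le hA₁ (le_max_left _ _)
        linarith [h1.1]
    have hdisj : Disjoint ({ω | S ω > x + A} ∩ {ω | Y ω > -A})
        ((S ⁻¹' Set.Ioc (-A) (x+A)) ∩ {ω | Y ω > x + A}) := by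
      rw [Set.disjoint_left]
      rintro ω ⟨h1, _⟩ ⟨h2, _⟩
      simp only [Set.mem_setOf_eq] at h1
      simp only [Set.mem_preimage, Set.mem_Ioc] at h2
      linarith [h2.2]
    have hmeasE2 : MeasurableSet ((S ⁻¹' Set.Ioc (-A) (x+A)) ∩ {ω | Y ω > x + A}) :=
      (hS measurableSet_Ioc).inter (hY measurableSet_Ioi)
    have hsum : (μ (({ω | S ω > x + A} ∩ {ω | Y ω > -A}) ∪
          ((S ⁻¹' Set.Ioc (-A) (x+A)) ∩ {ω | Y ω > x + A}))).toReal
        = (μ ({ω | S ω > x + A} ∩ {ω | Y ω > -A})).toReal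
          + (μ ((S ⁻¹' Set.Ioc (-A) (x+A)) ∩ {ω | Y ω > x + A})).toReal := by
      rw [measure_union hdisj hmeasE2,
        ENNReal.toReal_add (measure_ne_top _ _) (measure_ne_top _ _)]
    have hprod1 : (μ ({ω | S ω > x + A} ∩ {ω | Y ω > -A})).toReal
        = (μ {ω | S ω > x + A}).toReal * (μ {ω | Y ω > -A}).toReal :=
      indep_tail_prod hind measurableSet_Ioi measurableSet_Ioi
    have hprod2 : (μ ((S ⁻¹' Set.Ioc (-A) (x+A)) ∩ {ω | Y ω > x + A})).toReal
        = (μ (S ⁻¹' Set.Ioc (-A) (x+A))).toReal * (μ {ω | Y ω > x + A}).toReal :=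
      indep_tail_prod hind measurableSet_Ioc measurableSet_Ioi
    have hIoc : 1 - 2*η ≤ (μ (S ⁻¹' Set.Ioc (-A) (x+A))).toReal := by
      have hinc2 : {ω | S ω > -A} ⊆ (S ⁻¹' Set.Ioc (-A) (x+A)) ∪ {ω | S ω > x + A} := by
        intro ω hω
        simp only [Set.mem_setOf_eq] at hω
        by_cases hcase : S ω ≤ x + A
        · exact Or.inl ⟨hω, hcase⟩
        · exact Or.inr (by simp only [Set.mem_setOf_eq]; linarith)
      have h5 := le_trans (ENNReal.toReal_mono (measure_ne_top μ _) (measure_mono hinc2))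
        (toReal_union_le _ _)
      linarith
    have hmono : (μ (({ω | S ω > x + A} ∩ {ω | Y ω > -A}) ∪
          ((S ⁻¹' Set.Ioc (-A) (x+A)) ∩ {ω | Y ω > x + A}))).toReal
        ≤ (μ {ω | S ω + Y ω > x}).toReal :=
      ENNReal.toReal_mono (measure_ne_top _ _) (measure_mono hincl)
    have hterm1 : (1-ε) * U x ≤ (μ {ω | S ω > x + A}).toReal * (μ {ω | Y ω > -A}).toReal :=
      lower_arith hη hη4 hη1 hUA hUx hL2 hL1 hYA
    have hterm2 : (1-ε) * TY x ≤ (μ (S ⁻¹' Set.Ioc (-A) (x+A))).toReal * TY (x + A) :=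
      lower_arith2 hη hη4 hη1 (hTYnn x) (hTYnn (x+A)) hL2Y hIoc
    have heq : (1-ε) * (U x + TY x) = (1-ε) * U x + (1-ε) * TY x := by ring
    rw [heq]
    have final := hsum ▸ hmono
    rw [hprod1, hprod2] at final
    linarith
  · -- upper bound
    have hincl : {ω | S ω + Y ω > x} ⊆
        {ω | S ω > x * (1-δ)} ∪ {ω | Y ω > x * (1-δ)}
          ∪ ({ω | S ω > x * δ} ∩ {ω | Y ω > x * δ}) := by
      intro ω hω
      simp only [Set.mem_setOf_eq, Set.mem_union, Set.mem_inter_iff] at *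
      by_contra h
      push_neg at h
      obtain ⟨⟨h1, h2⟩, h3⟩ := h
      rcases le_or_gt (S ω) (x * δ) with hc | hc
      · nlinarith
      · have := h3 hc; nlinarith
    have hub : (μ {ω | S ω + Y ω > x}).toReal
        ≤ (μ {ω | S ω > x * (1-δ)}).toReal + (μ {ω | Y ω > x * (1-δ)}).toReal
          + (μ ({ω | S ω > x * δ} ∩ {ω | Y ω > x * δ})).toReal := by
      refine le_trans (ENNReal.toReal_mono (measure_ne_top μ _) (measure_mono hincl)) ?_
      refine le_trans (toReal_union_le _ _) ?_
      have h6 := toReal_union_le (μ := μ) {ω | S ω > x * (1-δ)} {ω | Y ω > x * (1-δ)}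
      linarith
    have hprod : (μ ({ω | S ω > x * δ} ∩ {ω | Y ω > x * δ})).toReal
        = (μ {ω | S ω > x * δ}).toReal * TY (x * δ) :=
      indep_tail_prod hind measurableSet_Ioi measurableSet_Ioi
    have hSδ : (μ {ω | S ω > x * δ}).toReal ≤ (1+η) * (K * U x) :=
      le_trans hE5 (by nlinarith)
    have hthird : (μ ({ω | S ω > x * δ} ∩ {ω | Y ω > x * δ})).toReal ≤ η * U x := by
      rw [hprod]
      exact third_arith hη hK hUx ENNReal.toReal_nonneg (hTYnn _) hSδ hE4
    have hfirst : (μ {ω | S ω > x * (1-δ)}).toReal ≤ (1+η) * ((1+η) * U x) :=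
      le_trans hE1 (by nlinarith)
    have hsecond : TY (x * (1-δ)) ≤ (1+η) * TY x := hE2Y
    have := upper_arith hη hη4 hη1 hUx (hTYnn x) hfirst hsecond hthird
    linarith



noncomputable def tailF {Ω : Type*} [MeasurableSpace Ω] (μ : Measure Ω) (Z : Ω → ℝ) : ℝ → ℝ :=
  fun x => (μ {ω | Z ω > x}).toReal

variable {Ω : Type*} [MeasurableSpace Ω] {μ : Measure Ω} [IsProbabilityMeasure μ]







section Main

variable {n : ℕ} (hn : 1 ≤ n) (X : Fin n → Ω → ℝ)

open scoped Classical in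
/-- the reference tail: sum of tails over the consistently varying indices of `s` -/
noncomputable def refU (μ : Measure Ω) (X : Fin n → Ω → ℝ) (s : Finset (Fin n)) : ℝ → ℝ :=
  fun x => ∑ i ∈ s.filter (fun i => ConsistentlyVaryingTail (tailF μ (X i))),
    (μ {ω | X i ω > x}).toReal

end Main

section Main2

variable {n : ℕ} {X : Fin n → Ω → ℝ}

lemma refU_anti (s : Finset (Fin n)) : Antitone (refU μ X s) := by
  intro a b hab
  exact Finset.sum_le_sum fun i _ => tail_anti hab

lemma refU_pos {i0 : Fin n} {s : Finset (Fin n)}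
    (hi0 : i0 ∈ s) (hcv : ConsistentlyVaryingTail (tailF μ (X i0)))
    (hpos : ∀ i x, 0 < (μ {ω | X i ω > x}).toReal) (x : ℝ) :
    0 < refU μ X s x := by
  classical
  have hmem : i0 ∈ s.filter (fun i => ConsistentlyVaryingTail (tailF μ (X i))) :=
    Finset.mem_filter.mpr ⟨hi0, hcv⟩
  calc (0:ℝ) < (μ {ω | X i0 ω > x}).toReal := hpos i0 x
    _ ≤ _ := Finset.single_le_sum (f := fun i => (μ {ω | X i ω > x}).toReal)
        (fun i _ => ENNReal.toReal_nonneg) hmem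

lemma refU_ge {i0 : Fin n} {s : Finset (Fin n)}
    (hi0 : i0 ∈ s) (hcv : ConsistentlyVaryingTail (tailF μ (X i0))) (x : ℝ) :
    (μ {ω | X i0 ω > x}).toReal ≤ refU μ X s x := by
  classical
  exact Finset.single_le_sum (f := fun i => (μ {ω | X i ω > x}).toReal)
    (fun i _ => ENNReal.toReal_nonneg)
    (Finset.mem_filter.mpr ⟨hi0, hcv⟩)

lemma refU_cvtb (s : Finset (Fin n))
    (hpos : ∀ i x, 0 < (μ {ω | X i ω > x}).toReal) : CVTB (refU μ X s) := by
  classical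
  exact cvtb_sum _ _ fun i hi =>
    cvt_to_cvtb (Finset.mem_filter.mp hi).2 tail_anti (hpos i)

lemma refU_tendsto_zero (s : Finset (Fin n)) (hmeas : ∀ i, Measurable (X i)) :
    Tendsto (refU μ X s) atTop (nhds 0) := by
  classical
  have : Tendsto (fun x => ∑ i ∈ s.filter (fun i => ConsistentlyVaryingTail (tailF μ (X i))),
      (μ {ω | X i ω > x}).toReal) atTop
      (nhds (∑ i ∈ s.filter (fun i => ConsistentlyVaryingTail (tailF μ (X i))), (0:ℝ))) :=
    tendsto_finset_sum _ fun i _ => tail_tendsto_zero (hmeas i)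
  simp only [Finset.sum_const_zero] at this
  exact this


lemma key_sandwich [IsProbabilityMeasure μ] (hmeas : ∀ i, Measurable (X i))
    (hindep : iIndepFun X μ)
    (hpos : ∀ i x, 0 < (μ {ω | X i ω > x}).toReal)
    {i0 : Fin n} (h1 : ConsistentlyVaryingTail (tailF μ (X i0)))
    (hk : ∀ i, ConsistentlyVaryingTail (tailF μ (X i)) ∨
      Tendsto (fun x => (μ {ω | X i ω > x}).toReal / (μ {ω | X i0 ω > x}).toReal)
        atTop (nhds 0)) :
    ∀ t : Finset (Fin n), ∀ ε : ℝ, 0 < ε → ∀ᶠ x in atTop,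
      (1-ε) * refU μ X (insert i0 t) x ≤ (μ {ω | (∑ i ∈ insert i0 t, X i ω) > x}).toReal ∧
      (μ {ω | (∑ i ∈ insert i0 t, X i ω) > x}).toReal ≤ (1+ε) * refU μ X (insert i0 t) x := by
  classical
  intro t
  induction t using Finset.induction_on with
  | empty =>
      intro ε hε
      have hU : ∀ x, refU μ X (insert i0 ∅) x = (μ {ω | X i0 ω > x}).toReal := by
        intro x
        rw [refU, show insert i0 (∅ : Finset (Fin n)) = {i0} by simp,
          Finset.filter_singleton, if_pos h1, Finset.sum_singleton]
      have hS : ∀ x : ℝ, {ω | (∑ i ∈ insert i0 (∅ : Finset (Fin n)), X i ω) > x}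
          = {ω | X i0 ω > x} := by
        intro x; ext ω; simp
      filter_upwards with x
      rw [hU, hS]
      have := ENNReal.toReal_nonneg (a := μ {ω | X i0 ω > x})
      constructor <;> nlinarith
  | @insert j t hj ih =>
      intro ε hε
      by_cases hji : j = i0
      · subst hji
        simp only [Finset.insert_idem]
        exact ih ε hε
      · have hjnot : j ∉ insert i0 t := by simp [Finset.mem_insert, hji, hj]
        rw [Finset.insert_comm]
        have hSmeas : Measurable (fun ω => ∑ i ∈ insert i0 t, X i ω) :=
          Finset.measurable_sum _ fun i _ => hmeas i
        have hind : IndepFun (fun ω => ∑ i ∈ insert i0 t, X i ω) (X j) μ := by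
          have h := hindep.indepFun_finsetSum_of_notMem hmeas hjnot
          have he : (∑ i ∈ insert i0 t, X i) = fun ω => ∑ i ∈ insert i0 t, X i ω := by
            ext ω; simp [Finset.sum_apply]
          rwa [he] at h
        have hsetS : ∀ x : ℝ, {ω | (∑ i ∈ insert j (insert i0 t), X i ω) > x}
            = {ω | (∑ i ∈ insert i0 t, X i ω) + X j ω > x} := by
          intro x; ext ω; simp [Finset.sum_insert hjnot, add_comm]
        have hUpos' : ∀ x, 0 < refU μ X (insert i0 t) x :=
          fun x => refU_pos (Finset.mem_insert_self i0 t) h1 hpos x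
        by_cases hC : ConsistentlyVaryingTail (tailF μ (X j))
        · have hres := step_cv (μ := μ) hSmeas (hmeas j) hind
            (refU_anti (insert i0 t)) hUpos' (refU_cvtb (insert i0 t) hpos)
            (refU_tendsto_zero (insert i0 t) hmeas)
            (cvt_to_cvtb hC tail_anti (hpos j)) ih
          have hUins : ∀ x, refU μ X (insert j (insert i0 t)) x
              = refU μ X (insert i0 t) x + (μ {ω | X j ω > x}).toReal := by
            intro x
            rw [refU, refU, Finset.filter_insert, if_pos hC,
              Finset.sum_insert (by simp [Finset.mem_filter, hjnot])]
            ring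
          filter_upwards [hres ε hε] with x hx
          rw [hUins x, hsetS x]
          exact hx
        · have hsm : Tendsto (fun x => (μ {ω | X j ω > x}).toReal
              / (μ {ω | X i0 ω > x}).toReal) atTop (nhds 0) := (hk j).resolve_left hC
          have hres := step_o (μ := μ) hSmeas (hmeas j) hind
            (refU_anti (insert i0 t)) hUpos' (refU_cvtb (insert i0 t) hpos)
            (refU_ge (Finset.mem_insert_self i0 t) h1) (hpos i0) tail_anti
            (cvt_to_cvtb h1 tail_anti (hpos i0)) ih hsm (hpos j)
          have hUins : ∀ x, refU μ X (insert j (insert i0 t)) x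
              = refU μ X (insert i0 t) x := by
            intro x
            rw [refU, refU, Finset.filter_insert, if_neg hC]
          filter_upwards [hres ε hε] with x hx
          rw [hUins x, hsetS x]
          exact hx

end Main2

end CVarAux

/-- If `X₁` has a consistently varying tail and each other `X_k` either has a consistently
varying tail or satisfies `P(X_k > x) = o(P(X₁ > x))`, then the sum `X₁ + ⋯ + Xₙ` has a
consistently varying tail. -/
theorem sum_cvar
    {Ω : Type*} [MeasurableSpace Ω] (μ : Measure Ω) [IsProbabilityMeasure μ]
    (n : ℕ) (hn : 1 ≤ n) (X : Fin n → Ω → ℝ) (hmeas : ∀ i, Measurable (X i))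
    (hindep : iIndepFun X μ)
    (hpos : ∀ i, ∀ x : ℝ, 0 < (μ {ω | X i ω > x}).toReal)
    (h1 : ConsistentlyVaryingTail (fun x => (μ {ω | X ⟨0, hn⟩ ω > x}).toReal))
    (hk : ∀ i : Fin n, i ≠ ⟨0, hn⟩ →
      ConsistentlyVaryingTail (fun x => (μ {ω | X i ω > x}).toReal) ∨
        Tendsto (fun x : ℝ =>
          (μ {ω | X i ω > x}).toReal / (μ {ω | X ⟨0, hn⟩ ω > x}).toReal) atTop (nhds 0)) :
    ConsistentlyVaryingTail (fun x => (μ {ω | (∑ i, X i ω) > x}).toReal) := by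
  classical
  open CVarAux in
  set i0 : Fin n := ⟨0, hn⟩ with hi0def
  have h1' : ConsistentlyVaryingTail (CVarAux.tailF μ (X i0)) := h1
  have hk' : ∀ i, ConsistentlyVaryingTail (CVarAux.tailF μ (X i)) ∨
      Tendsto (fun x => (μ {ω | X i ω > x}).toReal / (μ {ω | X i0 ω > x}).toReal)
        atTop (nhds 0) := by
    intro i
    by_cases h : i = i0
    · exact Or.inl (h ▸ h1')
    · exact hk i h
  have hsand0 := CVarAux.key_sandwich hmeas hindep hpos h1' hk' (Finset.univ.erase i0)
  rw [Finset.insert_erase (Finset.mem_univ i0)] at hsand0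
  -- tail positivity of the total sum
  have hTSpos : ∀ x : ℝ, 0 < (μ {ω | (∑ i, X i ω) > x}).toReal := by
    intro x
    set b : ℝ := |x| + 1 with hbdef
    have hb : 0 < b := by positivity
    have hsub : (⋂ i ∈ Finset.univ, X i ⁻¹' Set.Ioi b) ⊆ {ω | (∑ i, X i ω) > x} := by
      intro ω hω
      simp only [Set.mem_iInter, Set.mem_preimage, Set.mem_Ioi, Finset.mem_univ,
        forall_const] at hω
      have hne : (Finset.univ : Finset (Fin n)).Nonempty :=
        Finset.univ_nonempty_iff.mpr (Fin.pos_iff_nonempty.mp (by omega))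
      have hlt : ∑ _i ∈ Finset.univ, b < ∑ i, X i ω :=
        Finset.sum_lt_sum_of_nonempty hne fun i _ => hω i
      rw [Finset.sum_const, Finset.card_univ, Fintype.card_fin, nsmul_eq_mul] at hlt
      have hnb : b ≤ (n:ℝ) * b := by
        have hn1 : (1:ℝ) ≤ (n:ℝ) := by exact_mod_cast hn
        nlinarith
      have hxb : x < b := by
        have := le_abs_self x; linarith
      simp only [Set.mem_setOf_eq]
      linarith
    have hprodeq := hindep.measure_inter_preimage_eq_mul (S := Finset.univ)
      (sets := fun _ => Set.Ioi b) (fun i _ => measurableSet_Ioi)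
    have hne0 : μ (⋂ i ∈ Finset.univ, X i ⁻¹' Set.Ioi b) ≠ 0 := by
      rw [hprodeq]
      rw [Finset.prod_ne_zero_iff]
      intro i _
      intro h0
      have := hpos i b
      rw [show {ω | X i ω > b} = X i ⁻¹' Set.Ioi b from rfl, h0] at this
      simp at this
    have hle := measure_mono (μ := μ) hsub
    have hne : μ {ω | (∑ i, X i ω) > x} ≠ 0 := by
      intro h0
      rw [h0] at hle
      exact hne0 (le_antisymm hle (zero_le (a := _)))
    exact ENNReal.toReal_pos hne (measure_ne_top _ _)
  -- the consistently varying bound for the sum's tail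
  have hcvtb : CVarAux.CVTB (fun x => (μ {ω | (∑ i, X i ω) > x}).toReal) := by
    intro ε hε
    obtain ⟨η, hη, hη8, hη1⟩ : ∃ η : ℝ, 0 < η ∧ 8 * η ≤ ε ∧ 8 * η ≤ 1 :=
      ⟨min ε 1 / 8, by positivity, by linarith [min_le_left ε 1], by linarith [min_le_right ε 1]⟩
    obtain ⟨y₀, hy₀, hUb⟩ := CVarAux.refU_cvtb (μ := μ) (X := X) Finset.univ hpos η hη
    refine ⟨y₀, hy₀, fun y hy => ?_⟩
    have hy0 : 0 < y := lt_trans hy₀.1 hy.1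
    have htendy : Tendsto (fun x : ℝ => x * y) atTop atTop :=
      Tendsto.atTop_mul_const hy0 tendsto_id
    filter_upwards [hsand0 η hη, htendy.eventually (hsand0 η hη), hUb y hy]
      with x h1x h2x h3x
    have hUx : 0 < CVarAux.refU μ X Finset.univ x :=
      CVarAux.refU_pos (Finset.mem_univ i0) h1' hpos x
    have e1 : (μ {ω | (∑ i, X i ω) > x * y}).toReal
        ≤ (1+η) * CVarAux.refU μ X Finset.univ (x * y) := h2x.2
    have e2 : CVarAux.refU μ X Finset.univ (x * y)
        ≤ (1+η) * CVarAux.refU μ X Finset.univ x := h3x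
    have e3 : (1-η) * CVarAux.refU μ X Finset.univ x ≤ (μ {ω | (∑ i, X i ω) > x}).toReal :=
      h1x.1
    have harith : (1+η) * (1+η) ≤ (1+ε) * (1-η) := by nlinarith
    have c1 : (μ {ω | (∑ i, X i ω) > x * y}).toReal
        ≤ ((1+η) * (1+η)) * CVarAux.refU μ X Finset.univ x := by nlinarith
    have c2 : ((1+η) * (1+η)) * CVarAux.refU μ X Finset.univ x
        ≤ ((1+ε) * (1-η)) * CVarAux.refU μ X Finset.univ x := by nlinarith
    have c3 : ((1+ε) * (1-η)) * CVarAux.refU μ X Finset.univ x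
        ≤ (1+ε) * (μ {ω | (∑ i, X i ω) > x}).toReal := by nlinarith
    linarith
  exact CVarAux.cvtb_to_cvt hcvtb CVarAux.tail_anti hTSpos
end

section
/- Let X₁, X₂, … be nonnegative independent random variables, and suppose F_{X_ν} ∈ 𝒟 for some ν ≥ 1 and limsup_{x→∞} sup_{n≥ν} (1/(n F̄_{X_ν}(x))) Σ_{i=1}^n F̄_{X_i}(x) < ∞. Then for each p > J⁺_{F_{X_ν}} there exists a constant c₁ > 0 such that P(X₁+⋯+Xₙ > x) ≤ c₁ n^{p+1} F̄_{X_ν}(x) for all n ≥ ν and all x ≥ 0. -/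
open Filter MeasureTheory ProbabilityTheory

private lemma tail_aux (F : ℝ → ℝ) (G : ℕ → ℝ → ℝ) (S : ℕ → ℝ → ℝ)
    (hFmono : ∀ ⦃a b : ℝ⦄, a ≤ b → F b ≤ F a)
    (hFpos : ∀ x, 0 < F x)
    (hGnonneg : ∀ i x, 0 ≤ G i x)
    (hS1 : ∀ n x, S n x ≤ 1)
    (hsub : ∀ n : ℕ, 1 ≤ n → ∀ x : ℝ, S n x ≤ ∑ i ∈ Finset.Icc 1 n, G i (x / n))
    (ν : ℕ) (hν : 1 ≤ ν)
    (hD : ∀ y ∈ Set.Ioo (0:ℝ) 1, ∃ C : ℝ, ∀ᶠ x : ℝ in atTop, F (x*y) / F x ≤ C)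
    (hsup : ∃ C : ℝ, ∀ᶠ x : ℝ in atTop, ∀ n ≥ ν,
        (∑ i ∈ Finset.Icc 1 n, G i x) / ((n:ℝ) * F x) ≤ C)
    (J p : ℝ)
    (hJ : Tendsto (fun y : ℝ => -((1 / Real.log y) * Real.log (liminf
        (fun x : ℝ => F (x*y) / F x) atTop))) atTop (nhds J))
    (hp : J < p) :
    ∃ c₁ : ℝ, 0 < c₁ ∧ ∀ n ≥ ν, ∀ x : ℝ, 0 ≤ x →
      S n x ≤ c₁ * (n:ℝ)^(p+1) * F x := by
  classical
  obtain ⟨C₃, hC₃⟩ := hsup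
  obtain ⟨x₁, hx₁⟩ := eventually_atTop.mp hC₃
  have hC₃0 : 0 ≤ C₃ := by
    refine le_trans ?_ (hx₁ x₁ le_rfl ν le_rfl)
    exact div_nonneg (Finset.sum_nonneg fun i _ => hGnonneg i x₁)
      (mul_nonneg (Nat.cast_nonneg _) (hFpos x₁).le)
  set q := (J + p) / 2 with hqdef
  have hq1 : J < q := by simp only [hqdef]; linarith
  have hq2 : q < p := by simp only [hqdef]; linarith
  obtain ⟨y, hyq, hy2⟩ := ((hJ.eventually_lt_const hq1).and (eventually_ge_atTop 2)).exists
  have hy1 : (1:ℝ) < y := by linarith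
  have hy0 : (0:ℝ) < y := by linarith
  have hylog : 0 < Real.log y := Real.log_pos hy1
  -- the liminf L
  set g : ℝ → ℝ := fun x => F (x * y) / F x with hgdef
  have hg0 : ∀ x, 0 ≤ g x := fun x => div_nonneg (hFpos _).le (hFpos _).le
  have hgub : ∀ᶠ x : ℝ in atTop, g x ≤ 1 := by
    filter_upwards [eventually_ge_atTop (0:ℝ)] with x hx
    exact (div_le_one (hFpos x)).mpr (hFmono (le_mul_of_one_le_right hx hy1.le))
  -- lower bound from hD
  obtain ⟨C₂, hC₂⟩ := hD (1/y) ⟨by positivity, by rw [div_lt_one hy0]; exact hy1⟩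
  obtain ⟨x₂, hx₂⟩ := eventually_atTop.mp hC₂
  have hC₂pos : 0 < C₂ := by
    have h := hx₂ (max x₂ 0) (le_max_left _ _)
    have h2 : F (max x₂ 0 * (1/y)) ≥ F (max x₂ 0) :=
      hFmono (mul_le_of_le_one_right (le_max_right _ _) (by rw [div_le_one hy0]; exact hy1.le))
    have h3 : (1:ℝ) ≤ F (max x₂ 0 * (1/y)) / F (max x₂ 0) :=
      (one_le_div (hFpos _)).mpr h2
    linarith
  have hglb : ∀ᶠ x : ℝ in atTop, 1/C₂ ≤ g x := by
    filter_upwards [eventually_ge_atTop x₂, eventually_ge_atTop (0:ℝ)] with u hu hu0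
    have hx := hx₂ (u * y) (le_trans hu (le_mul_of_one_le_right hu0 hy1.le))
    rw [mul_assoc, mul_one_div, div_self (ne_of_gt hy0), mul_one] at hx
    rw [div_le_iff₀ (hFpos _)] at hx
    rw [hgdef]
    rw [div_le_div_iff₀ hC₂pos (hFpos u)]
    linarith
  have hbddg : IsBoundedUnder (· ≥ ·) atTop g :=
    isBoundedUnder_of ⟨0, fun x => hg0 x⟩
  have hcob : IsCoboundedUnder (· ≥ ·) atTop g :=
    IsBoundedUnder.isCoboundedUnder_ge ⟨1, hgub⟩
  set L := liminf g atTop with hLdef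
  have hL1 : 1/C₂ ≤ L := le_liminf_of_le hcob hglb
  have hLpos : 0 < L := lt_of_lt_of_le (by positivity) hL1
  -- L > y^(-q)
  have hlt : -((1 / Real.log y) * Real.log L) < q := hyq
  rw [neg_lt, one_div, inv_mul_eq_div, lt_div_iff₀ hylog] at hlt
  have hyL : y ^ (-q) < L := by
    have hlog : Real.log (y ^ (-q)) < Real.log L := by
      rw [Real.log_rpow hy0]; linarith
    exact (Real.log_lt_log_iff (Real.rpow_pos_of_pos hy0 _) hLpos).mp hlog
  have heg : ∀ᶠ x : ℝ in atTop, y ^ (-q) < g x :=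
    eventually_lt_of_lt_liminf hyL hbddg
  obtain ⟨x₀', hx₀'⟩ := eventually_atTop.mp heg
  set x₀ := max x₀' 1 with hx₀def
  have hx₀1 : (1:ℝ) ≤ x₀ := le_max_right _ _
  have hx₀0 : (0:ℝ) < x₀ := lt_of_lt_of_le one_pos hx₀1
  have hstep : ∀ x, x₀ ≤ x → F x ≤ y ^ q * F (x * y) := by
    intro x hx
    have h := hx₀' x (le_trans (le_max_left _ _) hx)
    rw [hgdef] at h
    rw [lt_div_iff₀ (hFpos x)] at h
    rw [Real.rpow_neg hy0.le, inv_mul_lt_iff₀ (Real.rpow_pos_of_pos hy0 q)] at h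
    exact h.le
  have hiter : ∀ k : ℕ, ∀ x, x₀ ≤ x → F x ≤ (y ^ q) ^ k * F (x * y ^ k) := by
    intro k
    induction k with
    | zero => intro x _; simp
    | succ k ih =>
      intro x hx
      have h1 := hstep x hx
      have hxy : x₀ ≤ x * y :=
        le_trans hx (le_mul_of_one_le_right (le_trans hx₀0.le hx) hy1.le)
      have h2 := ih (x * y) hxy
      have h3 := mul_le_mul_of_nonneg_left h2 (Real.rpow_nonneg hy0.le q)
      have heq : x * y * y ^ k = x * y ^ (k+1) := by rw [pow_succ]; ring
      rw [heq] at h3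
      calc F x ≤ y ^ q * F (x * y) := h1
        _ ≤ y ^ q * ((y ^ q) ^ k * F (x * y ^ (k+1))) := h3
        _ = (y ^ q) ^ (k+1) * F (x * y ^ (k+1)) := by rw [pow_succ]; ring
  -- key pointwise bound
  have hkey : ∀ n : ℕ, 1 ≤ n → ∀ x : ℝ, x₀ * y * n ≤ x →
      F (x / n) ≤ y ^ |q| * (n:ℝ) ^ p * F x := by
    intro n hn x hx
    have hn0 : (0:ℝ) < n := by exact_mod_cast hn
    have hn1 : (1:ℝ) ≤ n := by exact_mod_cast hn
    have hx0 : (0:ℝ) ≤ x := le_trans (by positivity) hx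
    obtain ⟨k, hk1, hk2⟩ : ∃ k : ℕ, (n:ℝ) ≤ y ^ k ∧ y ^ k ≤ (n:ℝ) * y := by
      have hex : ∃ k : ℕ, (n:ℝ) ≤ y ^ k := by
        refine ⟨n, le_trans ?_ (pow_le_pow_left₀ (by norm_num) hy2 n)⟩
        exact_mod_cast (Nat.lt_two_pow_self (n := n)).le
      refine ⟨Nat.find hex, Nat.find_spec hex, ?_⟩
      rcases Nat.eq_zero_or_pos (Nat.find hex) with h0 | hpos'
      · rw [h0, pow_zero]; nlinarith
      · obtain ⟨j, hj'⟩ := Nat.exists_eq_succ_of_ne_zero hpos'.ne'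
        have hj : ¬ ((n:ℝ) ≤ y ^ j) := Nat.find_min hex (by omega)
        push_neg at hj
        rw [hj', pow_succ]
        exact mul_le_mul_of_nonneg_right hj.le hy0.le
    have hykpos : (0:ℝ) < y ^ k := pow_pos hy0 k
    have hstep1 : F (x / n) ≤ F (x / y ^ k) :=
      hFmono (div_le_div_of_nonneg_left hx0 hn0 hk1)
    have hx₀k : x₀ ≤ x / y ^ k := by
      rw [le_div_iff₀ hykpos]
      calc x₀ * y ^ k ≤ x₀ * ((n:ℝ) * y) := by
            exact mul_le_mul_of_nonneg_left hk2 hx₀0.le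
        _ = x₀ * y * n := by ring
        _ ≤ x := hx
    have hstep2 := hiter k (x / y ^ k) hx₀k
    rw [div_mul_cancel₀ _ (ne_of_gt hykpos)] at hstep2
    have h1 : (y ^ q) ^ k = (y ^ k) ^ q := by
      rw [← Real.rpow_natCast (y ^ q) k, ← Real.rpow_natCast y k,
        ← Real.rpow_mul hy0.le, ← Real.rpow_mul hy0.le, mul_comm]
    have hyk1 : (1:ℝ) ≤ y ^ k := le_trans hn1 hk1
    have hcmp : (y ^ q) ^ k ≤ y ^ |q| * (n:ℝ) ^ p := by
      rw [h1]
      rcases le_or_gt 0 q with hq0 | hq0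
      · calc (y ^ k) ^ q ≤ ((n:ℝ) * y) ^ q := Real.rpow_le_rpow hykpos.le hk2 hq0
          _ = (n:ℝ) ^ q * y ^ q := Real.mul_rpow hn0.le hy0.le
          _ ≤ (n:ℝ) ^ p * y ^ |q| := by
              apply mul_le_mul
              · exact Real.rpow_le_rpow_of_exponent_le hn1 hq2.le
              · exact Real.rpow_le_rpow_of_exponent_le hy1.le (le_abs_self q)
              · exact Real.rpow_nonneg hy0.le q
              · exact Real.rpow_nonneg (by positivity) p
          _ = y ^ |q| * (n:ℝ) ^ p := mul_comm _ _
      · calc (y ^ k) ^ q ≤ (n:ℝ) ^ q := Real.rpow_le_rpow_of_nonpos hn0 hk1 hq0.le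
          _ ≤ (n:ℝ) ^ p := Real.rpow_le_rpow_of_exponent_le hn1 hq2.le
          _ ≤ y ^ |q| * (n:ℝ) ^ p :=
              le_mul_of_one_le_left (Real.rpow_nonneg hn0.le p)
                (Real.one_le_rpow hy1.le (abs_nonneg q))
    calc F (x / n) ≤ F (x / y ^ k) := hstep1
      _ ≤ (y ^ q) ^ k * F x := hstep2
      _ ≤ y ^ |q| * (n:ℝ) ^ p * F x :=
          mul_le_mul_of_nonneg_right hcmp (hFpos x).le
  -- thresholds
  set T := max (x₀ * y) (max x₁ 1) with hTdef
  have hT1 : x₀ * y ≤ T := le_max_left _ _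
  have hT2 : x₁ ≤ T := le_trans (le_max_left _ _) (le_max_right _ _)
  have hT3 : (1:ℝ) ≤ T := le_trans (le_max_right _ _) (le_max_right _ _)
  have hT0 : (0:ℝ) < T := lt_of_lt_of_le one_pos hT3
  have hyabs0 : (0:ℝ) < y ^ |q| := Real.rpow_pos_of_pos hy0 _
  set c₁ := max (C₃ * y ^ |q|) (y ^ |q| / F T) + 1 with hc₁def
  have hmax0 : 0 ≤ max (C₃ * y ^ |q|) (y ^ |q| / F T) :=
    le_trans (mul_nonneg hC₃0 hyabs0.le) (le_max_left _ _)
  have hc₁pos : 0 < c₁ := by rw [hc₁def]; linarith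
  refine ⟨c₁, hc₁pos, ?_⟩
  intro n hn x hx0'
  have hn1 : 1 ≤ n := le_trans hν hn
  have hn0R : (0:ℝ) < n := by exact_mod_cast hn1
  have hn1R : (1:ℝ) ≤ n := by exact_mod_cast hn1
  have hnp : (n:ℝ) ^ (p+1) = (n:ℝ) ^ p * n := by
    rw [Real.rpow_add hn0R, Real.rpow_one]
  have hFx := hFpos x
  have hnppos : (0:ℝ) < (n:ℝ) ^ p := Real.rpow_pos_of_pos hn0R p
  rcases le_or_gt x (T * n) with hxs | hxl
  · -- small x
    have hTn : x₀ * y * n ≤ T * n := mul_le_mul_of_nonneg_right hT1 hn0R.le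
    have h1 := hkey n hn1 (T * n) hTn
    rw [mul_div_assoc, div_self (ne_of_gt hn0R), mul_one] at h1
    have h2 : F (T * n) ≤ F x := hFmono hxs
    have hb : y ^ |q| / F T ≤ c₁ := by
      rw [hc₁def]; linarith [le_max_right (C₃ * y ^ |q|) (y ^ |q| / F T)]
    have hFT := hFpos T
    calc S n x ≤ 1 := hS1 n x
      _ ≤ (y ^ |q| / F T) * (n:ℝ) ^ p * F x := by
          rw [div_mul_eq_mul_div, div_mul_eq_mul_div, le_div_iff₀ hFT, one_mul]
          calc F T ≤ y ^ |q| * (n:ℝ) ^ p * F (T * n) := h1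
            _ ≤ y ^ |q| * (n:ℝ) ^ p * F x := by
                exact mul_le_mul_of_nonneg_left h2 (by positivity)
      _ ≤ c₁ * (n:ℝ) ^ (p+1) * F x := by
          rw [hnp]
          have hd0 : 0 ≤ y ^ |q| / F T := by positivity
          have e1 : (y ^ |q| / F T) * (n:ℝ) ^ p * F x ≤ c₁ * (n:ℝ) ^ p * F x :=
            mul_le_mul_of_nonneg_right (mul_le_mul_of_nonneg_right hb hnppos.le) hFx.le
          have e2 : c₁ * (n:ℝ) ^ p * F x ≤ c₁ * ((n:ℝ) ^ p * n) * F x := by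
            have : (n:ℝ) ^ p ≤ (n:ℝ) ^ p * n := le_mul_of_one_le_right hnppos.le hn1R
            exact mul_le_mul_of_nonneg_right (mul_le_mul_of_nonneg_left this hc₁pos.le) hFx.le
          exact le_trans e1 e2
  · -- large x
    have hxdn : T ≤ x / n := by rw [le_div_iff₀ hn0R]; linarith
    have hs := hx₁ (x / n) (le_trans hT2 hxdn) n hn
    rw [div_le_iff₀ (mul_pos hn0R (hFpos (x/n)))] at hs
    have hkx : x₀ * y * n ≤ x :=
      le_trans (mul_le_mul_of_nonneg_right hT1 hn0R.le) (le_of_lt hxl)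
    have hk := hkey n hn1 x hkx
    have hb : C₃ * y ^ |q| ≤ c₁ := by
      rw [hc₁def]; linarith [le_max_left (C₃ * y ^ |q|) (y ^ |q| / F T)]
    calc S n x ≤ ∑ i ∈ Finset.Icc 1 n, G i (x / n) := hsub n hn1 x
      _ ≤ C₃ * ((n:ℝ) * F (x / n)) := hs
      _ ≤ C₃ * ((n:ℝ) * (y ^ |q| * (n:ℝ) ^ p * F x)) := by
          apply mul_le_mul_of_nonneg_left _ hC₃0
          exact mul_le_mul_of_nonneg_left hk hn0R.le
      _ = (C₃ * y ^ |q|) * ((n:ℝ) ^ p * n) * F x := by ring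
      _ ≤ c₁ * (n:ℝ) ^ (p+1) * F x := by
          rw [hnp]
          exact mul_le_mul_of_nonneg_right
            (mul_le_mul_of_nonneg_right hb (by positivity)) hFx.le

/-- Upper bound on the tails of sums of independent nonnegative random variables when
`F_{X_ν}` has a dominatingly varying tail (Lemma 3.2 of Dindienė–Šiaulys). Here the random
variables are `X 1, X 2, …`, `J` is the upper Matuszewska index of `F_{X_ν}` and `p > J`. -/
theorem tail_sum_upper_bound
    {Ω : Type*} [MeasurableSpace Ω] (μ : Measure Ω) [IsProbabilityMeasure μ]
    (X : ℕ → Ω → ℝ) (hmeas : ∀ i, Measurable (X i))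
    (hnonneg : ∀ i ω, 0 ≤ X i ω)
    (hindep : iIndepFun X μ)
    (ν : ℕ) (hν : 1 ≤ ν)
    (hpos : ∀ x : ℝ, 0 < (μ {ω | X ν ω > x}).toReal)
    (hD : ∀ y ∈ Set.Ioo (0 : ℝ) 1, ∃ C : ℝ, ∀ᶠ x : ℝ in atTop,
        (μ {ω | X ν ω > x * y}).toReal / (μ {ω | X ν ω > x}).toReal ≤ C)
    (hsup : ∃ C : ℝ, ∀ᶠ x : ℝ in atTop, ∀ n ≥ ν,
        (∑ i ∈ Finset.Icc 1 n, (μ {ω | X i ω > x}).toReal)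
          / ((n : ℝ) * (μ {ω | X ν ω > x}).toReal) ≤ C)
    (J p : ℝ)
    (hJ : Tendsto (fun y : ℝ =>
        -((1 / Real.log y) * Real.log (liminf (fun x : ℝ =>
          (μ {ω | X ν ω > x * y}).toReal / (μ {ω | X ν ω > x}).toReal) atTop)))
      atTop (nhds J))
    (hp : J < p) :
    ∃ c₁ : ℝ, 0 < c₁ ∧ ∀ n ≥ ν, ∀ x : ℝ, 0 ≤ x →
      (μ {ω | (∑ i ∈ Finset.Icc 1 n, X i ω) > x}).toReal ≤
        c₁ * (n : ℝ) ^ (p + 1) * (μ {ω | X ν ω > x}).toReal := by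
  classical
  set F : ℝ → ℝ := fun t => (μ {ω | X ν ω > t}).toReal with hF
  set G : ℕ → ℝ → ℝ := fun i t => (μ {ω | X i ω > t}).toReal with hG
  set S : ℕ → ℝ → ℝ := fun n x => (μ {ω | (∑ i ∈ Finset.Icc 1 n, X i ω) > x}).toReal with hS
  have hFmono : ∀ ⦃a b : ℝ⦄, a ≤ b → F b ≤ F a := by
    intro a b hab
    exact ENNReal.toReal_mono (measure_ne_top μ _)
      (measure_mono fun ω h => lt_of_le_of_lt hab h)
  have hGnonneg : ∀ i x, 0 ≤ G i x := fun i x => ENNReal.toReal_nonneg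
  have hS1 : ∀ n x, S n x ≤ 1 := by
    intro n x
    calc S n x ≤ (μ Set.univ).toReal :=
          ENNReal.toReal_mono (measure_ne_top μ _) (measure_mono (Set.subset_univ _))
      _ = 1 := by simp
  have hsub : ∀ n : ℕ, 1 ≤ n → ∀ x : ℝ, S n x ≤ ∑ i ∈ Finset.Icc 1 n, G i (x / n) := by
    intro n hn x
    have hsubset : {ω | (∑ i ∈ Finset.Icc 1 n, X i ω) > x} ⊆
        ⋃ i ∈ Finset.Icc 1 n, {ω | X i ω > x / n} := by
      intro ω hω
      by_contra hc
      simp only [Set.mem_iUnion, Set.mem_setOf_eq, not_exists, not_lt] at hc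
      have hsumle : (∑ i ∈ Finset.Icc 1 n, X i ω) ≤ ∑ i ∈ Finset.Icc 1 n, x / n :=
        Finset.sum_le_sum fun i hi => hc i hi
      rw [Finset.sum_const, Nat.card_Icc, Nat.add_sub_cancel, nsmul_eq_mul,
        mul_div_cancel₀] at hsumle
      · exact absurd hω (not_lt.mpr hsumle)
      · exact_mod_cast Nat.pos_of_ne_zero (by omega) |>.ne'
    have h1 : μ {ω | (∑ i ∈ Finset.Icc 1 n, X i ω) > x} ≤
        ∑ i ∈ Finset.Icc 1 n, μ {ω | X i ω > x / n} :=
      le_trans (measure_mono hsubset) (measure_biUnion_finset_le _ _)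
    calc S n x ≤ (∑ i ∈ Finset.Icc 1 n, μ {ω | X i ω > x / n}).toReal :=
          ENNReal.toReal_mono (ENNReal.sum_lt_top.mpr fun i _ => measure_lt_top μ _).ne h1
      _ = ∑ i ∈ Finset.Icc 1 n, G i (x / n) :=
          ENNReal.toReal_sum fun i _ => measure_ne_top μ _
  exact tail_aux F G S hFmono hpos hGnonneg hS1 hsub ν hν hD hsup J p hJ hp
end

section
/- Let X₁,…,Xₙ be independent real-valued random variables whose distribution functions all have consistently varying tails. Then P(X₁+⋯+Xₙ > x) ∼ Σ_{i=1}^n P(X_i > x) as x → ∞. -/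
open Filter MeasureTheory ProbabilityTheory

/-- Bonferroni lower bound (in the form without subtraction). -/
lemma bonferroni_aux {Ω : Type*} [MeasurableSpace Ω] (μ : Measure Ω) {ι : Type*} [DecidableEq ι]
    (s : Finset ι) (A : ι → Set Ω) (hA : ∀ i, MeasurableSet (A i)) :
    ∑ i ∈ s, μ (A i) ≤ μ (⋃ i ∈ s, A i) + ∑ i ∈ s, ∑ j ∈ s.erase i, μ (A i ∩ A j) := by
  induction s using Finset.induction_on with
  | empty => simp
  | @insert a s ha ih =>
    rw [Finset.sum_insert ha]
    have h1 : μ (A a) + μ (⋃ i ∈ s, A i) =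
        μ (A a ∪ ⋃ i ∈ s, A i) + μ (A a ∩ ⋃ i ∈ s, A i) := by
      exact (measure_union_add_inter _ (MeasurableSet.biUnion s.countable_toSet
        fun i _ => hA i)).symm
    have h2 : μ (A a ∩ ⋃ i ∈ s, A i) ≤ ∑ j ∈ s, μ (A a ∩ A j) := by
      rw [Set.inter_iUnion₂]
      exact measure_biUnion_finset_le s _
    have h3 : (A a ∪ ⋃ i ∈ s, A i) = ⋃ i ∈ insert a s, A i := by
      simp [Set.biUnion_insert]
    have h4 : ∑ i ∈ s, ∑ j ∈ s.erase i, μ (A i ∩ A j) ≤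
        ∑ i ∈ s, ∑ j ∈ (insert a s).erase i, μ (A i ∩ A j) := by
      refine Finset.sum_le_sum fun i _ => Finset.sum_le_sum_of_subset ?_
      exact Finset.erase_subset_erase _ (Finset.subset_insert _ _)
    calc μ (A a) + ∑ i ∈ s, μ (A i)
        ≤ μ (A a) + (μ (⋃ i ∈ s, A i) + ∑ i ∈ s, ∑ j ∈ s.erase i, μ (A i ∩ A j)) := by
          gcongr
      _ = (μ (A a) + μ (⋃ i ∈ s, A i)) + ∑ i ∈ s, ∑ j ∈ s.erase i, μ (A i ∩ A j) := by ring
      _ = (μ (⋃ i ∈ insert a s, A i) + μ (A a ∩ ⋃ i ∈ s, A i))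
            + ∑ i ∈ s, ∑ j ∈ s.erase i, μ (A i ∩ A j) := by rw [h1, h3]
      _ ≤ μ (⋃ i ∈ insert a s, A i) +
            (∑ j ∈ s, μ (A a ∩ A j) + ∑ i ∈ s, ∑ j ∈ (insert a s).erase i, μ (A i ∩ A j)) := by
          rw [add_assoc]; gcongr
      _ = μ (⋃ i ∈ insert a s, A i)
            + ∑ i ∈ insert a s, ∑ j ∈ (insert a s).erase i, μ (A i ∩ A j) := by
          rw [Finset.sum_insert ha, Finset.erase_insert ha]

/-- From consistent variation, extract an eventual multiplicative bound. -/
lemma cvar_eventual {T : ℝ → ℝ} (hT : ConsistentlyVaryingTail T) {ε : ℝ} (hε : 0 < ε) :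
    ∃ y : ℝ, y ∈ Set.Ioo (0:ℝ) 1 ∧ ∀ᶠ x in atTop, T (x * y) / T x < 1 + ε := by
  set ε' := min ε (1/2) with hε'
  have hε'p : 0 < ε' := lt_min hε (by norm_num)
  have h1 : ∀ᶠ y in nhdsWithin 1 (Set.Iio 1),
      |limsup (fun x : ℝ => T (x * y) / T x) atTop - 1| < ε' := by
    have := hT.eventually (eventually_mem_set.2 (Metric.ball_mem_nhds (1:ℝ) hε'p))
    simpa [Real.dist_eq] using this
  have h2 : Set.Ioo (0:ℝ) 1 ∈ nhdsWithin 1 (Set.Iio 1) := by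
    apply mem_nhdsWithin.2
    exact ⟨Set.Ioi 0, isOpen_Ioi, by norm_num, by
      intro y hy; exact ⟨hy.1, hy.2⟩⟩
  obtain ⟨y, hy1, hy2⟩ := (h1.and (eventually_of_mem h2 fun y hy => hy)).exists
  refine ⟨y, hy2, ?_⟩
  set L := limsup (fun x : ℝ => T (x * y) / T x) atTop with hL
  have hLlt : L < 1 + ε' := by
    have := abs_lt.1 hy1
    linarith [this.2]
  have hLgt : (0:ℝ) < L := by
    have h := abs_lt.1 hy1
    have : 1 - ε' < L := by linarith [h.1]
    have hε'le : ε' ≤ 1/2 := min_le_right _ _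
    linarith
  have hbdd : IsBoundedUnder (· ≤ ·) atTop (fun x : ℝ => T (x * y) / T x) := by
    by_contra hb
    have hempty : {a : ℝ | ∀ᶠ x : ℝ in atTop, T (x * y) / T x ≤ a} = ∅ := by
      rw [Set.eq_empty_iff_forall_notMem]
      intro a ha
      exact hb ⟨a, by simpa [Filter.eventually_map] using ha⟩
    have : L = 0 := by
      rw [hL, Filter.limsup_eq, hempty, Real.sInf_empty]
    linarith
  exact eventually_lt_of_limsup_lt
    (lt_of_lt_of_le hLlt (by simp [hε'] : 1 + ε' ≤ 1 + ε)) hbdd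

/-- Squeeze criterion for the ratio tending to 1. -/
lemma tendsto_ratio_one {P S : ℝ → ℝ} (hS : ∀ x, 0 < S x)
    (h : ∀ ε : ℝ, ε ∈ Set.Ioo (0:ℝ) 1 →
      ∀ᶠ x in atTop, (1 - ε) * S x ≤ P x ∧ P x ≤ (1 + ε) * S x) :
    Tendsto (fun x => P x / S x) atTop (nhds 1) := by
  rw [Metric.tendsto_nhds]
  intro ε0 hε0
  have hε : min (ε0/2) (1/2) ∈ Set.Ioo (0:ℝ) 1 :=
    ⟨lt_min (by linarith) (by norm_num),
      lt_of_le_of_lt (min_le_right _ _) (by norm_num)⟩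
  filter_upwards [h _ hε] with x hx
  have hSx := hS x
  have h1 : P x / S x ≤ 1 + min (ε0/2) (1/2) := (div_le_iff₀ hSx).2 (by linarith [hx.2])
  have h2 : 1 - min (ε0/2) (1/2) ≤ P x / S x := (le_div_iff₀ hSx).2 (by linarith [hx.1])
  have h3 : min (ε0/2) (1/2) ≤ ε0/2 := min_le_left _ _
  rw [Real.dist_eq, abs_lt]
  constructor <;> linarith

set_option maxHeartbeats 2000000 in
/-- If independent random variables `X₁,…,Xₙ` all have consistently varying tails, then
`P(X₁+⋯+Xₙ > x) ∼ Σ_{i=1}^n P(X_i > x)` as `x → ∞`. -/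
theorem sum_tail_asymp_of_cvar
    {Ω : Type*} [MeasurableSpace Ω] (μ : Measure Ω) [IsProbabilityMeasure μ]
    (n : ℕ) (hn : 1 ≤ n) (X : Fin n → Ω → ℝ) (hmeas : ∀ i, Measurable (X i))
    (hindep : iIndepFun X μ)
    (hpos : ∀ i, ∀ x : ℝ, 0 < (μ {ω | X i ω > x}).toReal)
    (hC : ∀ i, ConsistentlyVaryingTail (fun x => (μ {ω | X i ω > x}).toReal)) :
    Tendsto (fun x : ℝ =>
        (μ {ω | (∑ i, X i ω) > x}).toReal / ∑ i, (μ {ω | X i ω > x}).toReal)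
      atTop (nhds 1) := by
  classical
  haveI : Nonempty (Fin n) := Fin.pos_iff_nonempty.mp hn
  set T : Fin n → ℝ → ℝ := fun i x => (μ {ω | X i ω > x}).toReal with hTdef
  set P : ℝ → ℝ := fun x => (μ {ω | (∑ i, X i ω) > x}).toReal with hPdef
  set S : ℝ → ℝ := fun x => ∑ i, T i x with hSdef
  have hMS : ∀ i (x : ℝ), MeasurableSet {ω | X i ω > x} :=
    fun i x => (hmeas i) measurableSet_Ioi
  have hfin : ∀ s : Set Ω, μ s ≠ ⊤ := fun s => measure_ne_top μ s
  have hTnn : ∀ i x, 0 ≤ T i x := fun i x => ENNReal.toReal_nonneg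
  have hT1 : ∀ i x, T i x ≤ 1 := by
    intro i x
    have h := prob_le_one (μ := μ) (s := {ω | X i ω > x})
    simpa using ENNReal.toReal_mono ENNReal.one_ne_top h
  have hanti : ∀ i, Antitone (T i) := by
    intro i a b hab
    exact ENNReal.toReal_mono (hfin _)
      (measure_mono fun ω hω => lt_of_le_of_lt hab hω)
  have hSpos : ∀ x, 0 < S x :=
    fun x => Finset.sum_pos (fun i _ => hpos i x) Finset.univ_nonempty
  -- tails tend to zero
  have hT0 : ∀ i, Tendsto (T i) atTop (nhds 0) := by
    intro i
    have hantiN : Antitone fun m : ℕ => {ω | X i ω > (m : ℝ)} := by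
      intro a b hab ω hω
      have : (a:ℝ) ≤ (b:ℝ) := by exact_mod_cast hab
      exact lt_of_le_of_lt this hω
    have h1 : Tendsto (fun m : ℕ => μ {ω | X i ω > (m : ℝ)}) atTop
        (nhds (μ (⋂ m : ℕ, {ω | X i ω > (m : ℝ)}))) :=
      tendsto_measure_iInter_atTop (fun m => (hMS i _).nullMeasurableSet) hantiN ⟨0, hfin _⟩
    have hempty : (⋂ m : ℕ, {ω | X i ω > (m : ℝ)}) = ∅ := by
      ext ω
      simp only [Set.mem_iInter, Set.mem_setOf_eq, Set.mem_empty_iff_false, iff_false,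
        not_forall, not_lt]
      obtain ⟨m, hm'⟩ := exists_nat_gt (X i ω)
      exact ⟨m, hm'.le⟩
    rw [hempty, measure_empty] at h1
    have h2 : Tendsto (fun m : ℕ => T i (m : ℝ)) atTop (nhds 0) := by
      simpa [Function.comp_def, hTdef] using (ENNReal.tendsto_toReal (by simp)).comp h1
    rw [Metric.tendsto_nhds] at h2 ⊢
    intro ε hε
    obtain ⟨m, hm'⟩ := (h2 ε hε).exists
    filter_upwards [eventually_ge_atTop (m : ℝ)] with x hx
    have hmono : T i x ≤ T i (m:ℝ) := hanti i hx
    rw [Real.dist_eq, abs_lt] at hm' ⊢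
    constructor
    · have := hTnn i x; linarith [hm'.1]
    · linarith [hm'.2]
  -- choice of M making all tails at -M close to one
  have hTneg : ∀ δ : ℝ, 0 < δ → ∃ M : ℝ, 0 < M ∧ ∀ i, 1 - δ ≤ T i (-M) := by
    intro δ hδ
    have h : ∀ i, ∀ᶠ m : ℕ in atTop, 1 - δ ≤ T i (-(m : ℝ)) := by
      intro i
      have hmono : Monotone fun m : ℕ => {ω | X i ω > -(m : ℝ)} := by
        intro a b hab ω hω
        have : (a:ℝ) ≤ (b:ℝ) := by exact_mod_cast hab
        exact lt_of_le_of_lt (neg_le_neg this) hω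
      have h1 : Tendsto (fun m : ℕ => μ {ω | X i ω > -(m : ℝ)}) atTop
          (nhds (μ (⋃ m : ℕ, {ω | X i ω > -(m : ℝ)}))) :=
        tendsto_measure_iUnion_atTop hmono
      have huniv : (⋃ m : ℕ, {ω | X i ω > -(m : ℝ)}) = Set.univ := by
        ext ω
        simp only [Set.mem_iUnion, Set.mem_setOf_eq, Set.mem_univ, iff_true]
        obtain ⟨m, hm'⟩ := exists_nat_gt (-(X i ω))
        exact ⟨m, by linarith⟩
      rw [huniv, measure_univ] at h1
      have h2 : Tendsto (fun m : ℕ => T i (-(m : ℝ))) atTop (nhds 1) := by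
        simpa [Function.comp_def, hTdef] using (ENNReal.tendsto_toReal (by simp)).comp h1
      exact (h2.eventually_const_lt (by linarith)).mono fun m hm => hm.le
    obtain ⟨m, hm'⟩ := (eventually_all.2 h).exists
    refine ⟨(m : ℝ) + 1, by positivity, fun i => ?_⟩
    exact le_trans (hm' i) (hanti i (by linarith))
  -- extraction from consistent variation, uniform in i
  have key : ∀ ε : ℝ, 0 < ε → ∃ y ∈ Set.Ioo (0:ℝ) 1,
      ∀ i, ∀ᶠ x in atTop, T i (x * y) ≤ (1 + ε) * T i x := by
    intro ε hε
    choose y hy hev using fun i => cvar_eventual (hC i) hε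
    have hne : (Finset.univ : Finset (Fin n)).Nonempty := Finset.univ_nonempty
    set Y := Finset.univ.sup' hne y with hY
    have hYmem : ∀ i, y i ≤ Y := fun i => Finset.le_sup' _ (Finset.mem_univ i)
    have hY1 : Y < 1 := (Finset.sup'_lt_iff hne).2 fun i _ => (hy i).2
    have hY0 : 0 < Y := lt_of_lt_of_le (hy (Classical.arbitrary _)).1 (hYmem _)
    refine ⟨Y, ⟨hY0, hY1⟩, fun i => ?_⟩
    filter_upwards [hev i, eventually_ge_atTop (0:ℝ)] with x hx hx0
    have hx' : T i (x * y i) / T i x < 1 + ε := hx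
    have h1 : T i (x * Y) ≤ T i (x * y i) :=
      hanti i (by nlinarith [hYmem i])
    have h2 : T i (x * y i) ≤ (1 + ε) * T i x := by
      have := (div_lt_iff₀ (hpos i x)).1 hx'
      linarith
    linarith
  -- dominated variation at any fixed scale
  have keyK : ∀ c ∈ Set.Ioo (0:ℝ) 1, ∃ K : ℝ, 0 < K ∧
      ∀ i, ∀ᶠ x in atTop, T i (x * c) ≤ K * T i x := by
    rintro c ⟨hc0, hc1⟩
    obtain ⟨y, hy, hev⟩ := key 1 one_pos
    have hiter : ∀ i, ∀ k : ℕ, ∀ᶠ x in atTop, T i (x * y ^ k) ≤ 2 ^ k * T i x := by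
      intro i k
      induction k with
      | zero => refine Eventually.of_forall fun x => ?_; simp
      | succ k ih =>
        have htend : Tendsto (fun x : ℝ => x * y ^ k) atTop atTop :=
          tendsto_id.atTop_mul_const (pow_pos hy.1 k)
        filter_upwards [ih, htend.eventually (hev i)] with x h1 h2
        have heq : x * y ^ (k+1) = (x * y ^ k) * y := by ring
        rw [heq]
        calc T i ((x * y ^ k) * y) ≤ 2 * T i (x * y ^ k) := by norm_num at h2 ⊢; linarith
          _ ≤ 2 * (2 ^ k * T i x) := by linarith
          _ = 2 ^ (k+1) * T i x := by ring
    obtain ⟨k, hk⟩ := exists_pow_lt_of_lt_one hc0 hy.2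
    refine ⟨2 ^ k, by positivity, fun i => ?_⟩
    filter_upwards [hiter i k, eventually_ge_atTop (0:ℝ)] with x h1 hx0
    have h2 : T i (x * c) ≤ T i (x * y ^ k) := hanti i (by nlinarith [hk.le])
    linarith
  -- independence facts
  have prodIndep : ∀ t : Fin n → ℝ,
      μ (⋂ j, {ω | X j ω > t j}) = ∏ j, μ {ω | X j ω > t j} := by
    intro t
    exact hindep.meas_iInter fun j => ⟨Set.Ioi (t j), measurableSet_Ioi, rfl⟩
  have pairIndep : ∀ i j, i ≠ j → ∀ a b : ℝ,
      μ ({ω | X i ω > a} ∩ {ω | X j ω > b}) = μ {ω | X i ω > a} * μ {ω | X j ω > b} := by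
    intro i j hij a b
    exact (hindep.indepFun hij).measure_inter_preimage_eq_mul _ _
      measurableSet_Ioi measurableSet_Ioi
  -- the two main estimates
  have hn0 : (0:ℝ) < n := by
    have : 0 < n := hn
    exact_mod_cast this
  have hn0' : (n:ℝ) ≠ 0 := ne_of_gt hn0
  have upper : ∀ ε : ℝ, ε ∈ Set.Ioo (0:ℝ) 1 → ∀ᶠ x in atTop, P x ≤ (1 + ε) * S x := by
    rintro ε ⟨hε0, hε1⟩
    obtain ⟨y, hyIoo, hevy⟩ := key (ε/2) (by linarith)
    obtain ⟨hy0, hy1⟩ := hyIoo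
    set c : ℝ := (1 - y)/n with hc
    have hc0 : 0 < c := div_pos (by linarith) hn0
    have hc1 : c < 1 := by
      have h1' : c ≤ 1 - y := by
        rw [hc, div_le_iff₀ hn0]
        nlinarith [(show (1:ℝ) ≤ n by exact_mod_cast hn), hy1]
      linarith
    obtain ⟨K, hK0, hevK⟩ := keyK c ⟨hc0, hc1⟩
    set d : ℝ := ε/(2*n*K) with hd
    have hd0 : 0 < d := div_pos hε0 (by positivity)
    have hsmall : ∀ i, ∀ᶠ x in atTop, T i (x * c) ≤ d := by
      intro i
      have htc : Tendsto (fun x : ℝ => x * c) atTop atTop :=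
        tendsto_id.atTop_mul_const hc0
      exact (((hT0 i).comp htc).eventually_lt_const hd0).mono fun x hx => hx.le
    filter_upwards [eventually_all.2 hevy, eventually_all.2 hevK, eventually_all.2 hsmall,
      eventually_gt_atTop (0:ℝ)] with x h1 h2 h3 hx0
    have hincl : {ω | (∑ i, X i ω) > x} ⊆
        (⋃ i, {ω | X i ω > x * y}) ∪
          (⋃ i, ⋃ j ∈ Finset.univ.erase i,
            ({ω | X i ω > x * c} ∩ {ω | X j ω > x * c})) := by
      intro ω hω
      simp only [Set.mem_setOf_eq] at hω
      by_cases hcase : ∃ i, x * y < X i ω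
      · exact Or.inl (Set.mem_iUnion.2 hcase)
      · push_neg at hcase
        right
        have hcard : 2 ≤ (Finset.univ.filter (fun i => x * c < X i ω)).card := by
          by_contra hcb
          push_neg at hcb
          have hcb' : (Finset.univ.filter (fun i => x * c < X i ω)).card ≤ 1 := by omega
          have hs1 : ∑ i ∈ Finset.univ.filter (fun i => x * c < X i ω), X i ω ≤ x * y := by
            have hb := Finset.sum_le_card_nsmul (Finset.univ.filter (fun i => x * c < X i ω))
              (fun i => X i ω) (x * y) (fun i _ => hcase i)
            rw [nsmul_eq_mul] at hb
            refine le_trans hb ?_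
            have hcastle : ((Finset.univ.filter (fun i => x * c < X i ω)).card : ℝ) ≤ 1 := by
              exact_mod_cast hcb'
            have hcnn : (0:ℝ) ≤ ((Finset.univ.filter (fun i => x * c < X i ω)).card : ℝ) :=
              Nat.cast_nonneg _
            nlinarith [mul_nonneg hx0.le hy0.le]
          have hs2 : ∑ i ∈ Finset.univ.filter (fun i => ¬ (x * c < X i ω)), X i ω
              ≤ x * (1 - y) := by
            have hb := Finset.sum_le_card_nsmul
              (Finset.univ.filter (fun i => ¬ (x * c < X i ω)))
              (fun i => X i ω) (x * c) (fun i hi => le_of_not_gt (Finset.mem_filter.1 hi).2)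
            rw [nsmul_eq_mul] at hb
            refine le_trans hb ?_
            have hcardle : ((Finset.univ.filter (fun i => ¬ (x * c < X i ω))).card : ℝ)
                ≤ (n : ℝ) := by
              have h := Finset.card_filter_le Finset.univ (fun i => ¬ (x * c < X i ω))
              rw [Finset.card_univ, Fintype.card_fin] at h
              exact_mod_cast h
            have hxc : (0:ℝ) ≤ x * c := mul_nonneg hx0.le hc0.le
            have hnc : (n:ℝ) * (x * c) = x * (1 - y) := by
              rw [hc]; field_simp
            nlinarith
          have hsplit := Finset.sum_filter_add_sum_filter_not Finset.univ
            (fun i => x * c < X i ω) (fun i => X i ω)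
          rw [← hsplit] at hω
          linarith
        obtain ⟨i, hiB, j, hjB, hij⟩ := Finset.one_lt_card.1 hcard
        refine Set.mem_iUnion.2 ⟨i, Set.mem_iUnion₂.2
          ⟨j, Finset.mem_erase.2 ⟨hij.symm, Finset.mem_univ j⟩, ?_⟩⟩
        exact ⟨(Finset.mem_filter.1 hiB).2, (Finset.mem_filter.1 hjB).2⟩
    have hμ : μ {ω | (∑ i, X i ω) > x} ≤
        (∑ i, μ {ω | X i ω > x * y}) +
        ∑ i, ∑ j ∈ Finset.univ.erase i,
          μ {ω | X i ω > x * c} * μ {ω | X j ω > x * c} := by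
      refine le_trans (measure_mono hincl)
        (le_trans (measure_union_le _ _) (add_le_add ?_ ?_))
      · exact measure_iUnion_fintype_le _ _
      · refine le_trans (measure_iUnion_fintype_le _ _) (Finset.sum_le_sum fun i _ => ?_)
        refine le_trans (measure_biUnion_finset_le _ _) (Finset.sum_le_sum fun j hj => ?_)
        rw [pairIndep i j (Finset.ne_of_mem_erase hj).symm]
    have hAne : (∑ i, μ {ω | X i ω > x * y}) ≠ ⊤ :=
      (ENNReal.sum_lt_top.2 fun i _ => (measure_lt_top μ _)).ne
    have hBinne : ∀ i, (∑ j ∈ Finset.univ.erase i,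
        μ {ω | X i ω > x * c} * μ {ω | X j ω > x * c}) ≠ ⊤ :=
      fun i => (ENNReal.sum_lt_top.2 fun j _ =>
        (ENNReal.mul_lt_top (measure_lt_top μ _) (measure_lt_top μ _))).ne
    have hBne : (∑ i, ∑ j ∈ Finset.univ.erase i,
        μ {ω | X i ω > x * c} * μ {ω | X j ω > x * c}) ≠ ⊤ :=
      (ENNReal.sum_lt_top.2 fun i _ => (hBinne i).lt_top).ne
    have hPx : P x ≤ ∑ i, T i (x*y) +
        ∑ i, ∑ j ∈ Finset.univ.erase i, T i (x*c) * T j (x*c) := by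
      calc P x ≤ ((∑ i, μ {ω | X i ω > x * y}) +
          ∑ i, ∑ j ∈ Finset.univ.erase i,
            μ {ω | X i ω > x * c} * μ {ω | X j ω > x * c}).toReal :=
          ENNReal.toReal_mono (ENNReal.add_ne_top.2 ⟨hAne, hBne⟩) hμ
        _ = ∑ i, T i (x*y) +
            ∑ i, ∑ j ∈ Finset.univ.erase i, T i (x*c) * T j (x*c) := by
          rw [ENNReal.toReal_add hAne hBne, ENNReal.toReal_sum (fun i _ => hfin _),
            ENNReal.toReal_sum (fun i _ => hBinne i)]
          congr 1
          refine Finset.sum_congr rfl fun i _ => ?_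
          rw [ENNReal.toReal_sum (fun j _ => ENNReal.mul_ne_top (hfin _) (hfin _))]
          exact Finset.sum_congr rfl fun j _ => ENNReal.toReal_mul
    have hsum1 : ∑ i, T i (x*y) ≤ (1+ε/2) * S x := by
      calc ∑ i, T i (x*y) ≤ ∑ i, (1+ε/2) * T i x := Finset.sum_le_sum fun i _ => h1 i
        _ = (1+ε/2) * S x := by rw [← Finset.mul_sum]
    have hsum2 : ∑ i, ∑ j ∈ Finset.univ.erase i, T i (x*c) * T j (x*c) ≤ (ε/2) * S x := by
      have hterm : ∀ i j : Fin n, T i (x*c) * T j (x*c) ≤ (ε/(2*n)) * T j x := by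
        intro i j
        calc T i (x*c) * T j (x*c) ≤ d * (K * T j x) :=
            mul_le_mul (h3 i) (h2 j) (hTnn j _) hd0.le
          _ = (ε/(2*n)) * T j x := by rw [hd]; field_simp
      calc ∑ i, ∑ j ∈ Finset.univ.erase i, T i (x*c) * T j (x*c)
          ≤ ∑ i, ∑ j ∈ Finset.univ.erase i, (ε/(2*n)) * T j x :=
            Finset.sum_le_sum fun i _ => Finset.sum_le_sum fun j _ => hterm i j
        _ ≤ ∑ _i : Fin n, ∑ j : Fin n, (ε/(2*n)) * T j x :=
            Finset.sum_le_sum fun i _ => Finset.sum_le_sum_of_subset_of_nonneg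
              (Finset.erase_subset _ _)
              (fun j _ _ => mul_nonneg (div_nonneg hε0.le (by positivity)) (hTnn j x))
        _ = (n:ℝ) * ((ε/(2*n)) * S x) := by
            rw [Finset.sum_const, Finset.card_univ, Fintype.card_fin, nsmul_eq_mul,
              ← Finset.mul_sum]
        _ = (ε/2) * S x := by field_simp
    have hS : S x = ∑ i, T i x := rfl
    calc P x ≤ (1+ε/2) * S x + (ε/2) * S x := le_trans hPx (add_le_add hsum1 hsum2)
      _ = (1 + ε) * S x := by ring
  have lower : ∀ ε : ℝ, ε ∈ Set.Ioo (0:ℝ) 1 → ∀ᶠ x in atTop, (1 - ε) * S x ≤ P x := by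
    rintro ε ⟨hε0, hε1⟩
    set δ : ℝ := ε/(4*n) with hδ
    have hδ0 : 0 < δ := div_pos hε0 (by positivity)
    have hnδ : (n:ℝ) * δ = ε/4 := by rw [hδ]; field_simp
    have hδ1 : δ < 1 := by
      have h4 : (1:ℝ) ≤ n := by exact_mod_cast hn
      rw [hδ, div_lt_one (by positivity)]
      nlinarith
    obtain ⟨M, hM0, hM⟩ := hTneg δ hδ0
    obtain ⟨y, ⟨hy0, hy1⟩, hevy⟩ := key (ε/4) (by linarith)
    have hyinv : (1:ℝ) ≤ 1/y := by
      rw [le_div_iff₀ hy0]; linarith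
    have htendy : Tendsto (fun x : ℝ => x * (1/y)) atTop atTop :=
      tendsto_id.atTop_mul_const (by positivity)
    have hup : ∀ i, ∀ᶠ x in atTop, T i x ≤ (1 + ε/4) * T i (x * (1/y)) := by
      intro i
      refine (htendy.eventually (hevy i)).mono fun x hx => ?_
      have heq : (x * (1/y)) * y = x := by field_simp
      rwa [heq] at hx
    have hsm : ∀ j, ∀ᶠ x in atTop, T j (x * (1/y)) ≤ ε/(4*n) := by
      intro j
      exact (((hT0 j).comp htendy).eventually_lt_const
        (show (0:ℝ) < ε/(4*n) by positivity)).mono fun x hx => hx.le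
    have htendgap : Tendsto (fun x : ℝ => x * (1/y - 1)) atTop atTop :=
      tendsto_id.atTop_mul_const (by
        rw [sub_pos, lt_div_iff₀ hy0]; linarith)
    filter_upwards [eventually_all.2 hup, eventually_all.2 hsm,
      htendgap.eventually_ge_atTop ((n:ℝ)*M), eventually_gt_atTop (0:ℝ)] with x h1 h2 h3 hx0
    set z : ℝ := x * (1/y) with hz
    have hzx : x ≤ z := by nlinarith
    have hgap : (n:ℝ)*M ≤ z - x := by
      have : x * (1/y - 1) = z - x := by rw [hz]; ring
      linarith [h3, this.symm.le, this.le]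
    set A : Fin n → Set Ω := fun i => ⋂ j, {ω | X j ω > if j = i then z else -M} with hA
    have hAms : ∀ i, MeasurableSet (A i) := fun i => MeasurableSet.iInter fun j => hMS j _
    have hsub : ∀ i, A i ⊆ {ω | (∑ k, X k ω) > x} := by
      intro i ω hω
      simp only [hA, Set.mem_iInter, Set.mem_setOf_eq] at hω
      have hXi : z < X i ω := by have := hω i; simpa using this
      have hXj : ∀ j, j ≠ i → -M < X j ω := by
        intro j hj; have := hω j; simpa [hj] using this
      have hsplit : ∑ k, X k ω = X i ω + ∑ k ∈ Finset.univ.erase i, X k ω :=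
        (Finset.add_sum_erase Finset.univ (fun k => X k ω) (Finset.mem_univ i)).symm
      have hrest : -((n:ℝ)*M) ≤ ∑ k ∈ Finset.univ.erase i, X k ω := by
        have hb := Finset.card_nsmul_le_sum (Finset.univ.erase i)
          (fun k => X k ω) (-M) (fun k hk => (hXj k (Finset.ne_of_mem_erase hk)).le)
        rw [nsmul_eq_mul] at hb
        have hcard : (((Finset.univ.erase i).card : ℕ) : ℝ) ≤ (n:ℝ) := by
          have := Finset.card_erase_le (s := (Finset.univ : Finset (Fin n))) (a := i)
          have h' : (Finset.univ.erase i).card ≤ n := by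
            simpa [Finset.card_univ] using this
          exact_mod_cast h'
        have hcnn : (0:ℝ) ≤ (((Finset.univ.erase i).card : ℕ) : ℝ) := Nat.cast_nonneg _
        nlinarith
      show x < ∑ k, X k ω
      rw [hsplit]
      linarith
    have hAeq : ∀ i, (μ (A i)).toReal = ∏ j, T j (if j = i then z else -M) := by
      intro i
      rw [hA]
      rw [prodIndep (fun j => if j = i then z else -M), ENNReal.toReal_prod]
    have hAlow : ∀ i, (1 - ε/4) * T i z ≤ (μ (A i)).toReal := by
      intro i
      rw [hAeq i, ← Finset.mul_prod_erase Finset.univ _ (Finset.mem_univ i)]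
      have hfi : T i (if i = i then z else -M) = T i z := by simp
      rw [hfi]
      have hprod : (1 - ε/4) ≤ ∏ j ∈ Finset.univ.erase i, T j (if j = i then z else -M) := by
        have hstep : ∀ j ∈ Finset.univ.erase i, (1-δ) ≤ T j (if j = i then z else -M) := by
          intro j hj
          rw [if_neg (Finset.ne_of_mem_erase hj)]
          exact hM j
        have hcardE : (Finset.univ.erase i).card = n - 1 := by
          rw [Finset.card_erase_of_mem (Finset.mem_univ i), Finset.card_univ, Fintype.card_fin]
        have hberm := one_add_mul_le_pow (show (-2:ℝ) ≤ -δ by linarith) (n-1)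
        have hcast : (((n-1:ℕ)):ℝ) * δ ≤ ε/4 := by
          have hle : (((n-1:ℕ)):ℝ) ≤ (n:ℝ) := by exact_mod_cast Nat.sub_le n 1
          nlinarith
        calc (1 - ε/4) ≤ (1-δ)^(n-1) := by
              have : (1:ℝ) + ((n-1:ℕ):ℝ) * (-δ) ≤ (1 + -δ)^(n-1) := hberm
              have h2' : (1:ℝ) - ε/4 ≤ 1 + ((n-1:ℕ):ℝ) * (-δ) := by nlinarith
              calc (1:ℝ) - ε/4 ≤ 1 + ((n-1:ℕ):ℝ) * (-δ) := h2'
                _ ≤ (1 + -δ)^(n-1) := hberm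
                _ = (1-δ)^(n-1) := by ring_nf
          _ = ∏ _j ∈ Finset.univ.erase i, (1-δ) := by
              rw [Finset.prod_const, hcardE]
          _ ≤ ∏ j ∈ Finset.univ.erase i, T j (if j = i then z else -M) :=
              Finset.prod_le_prod (fun j _ => by linarith) hstep
      calc (1 - ε/4) * T i z ≤ (∏ j ∈ Finset.univ.erase i, T j (if j = i then z else -M)) * T i z := by
            have := mul_le_mul_of_nonneg_right hprod (hTnn i z)
            linarith
        _ = T i z * ∏ j ∈ Finset.univ.erase i, T j (if j = i then z else -M) := by ring
    have hcross : ∀ i j, j ≠ i →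
        μ (A i ∩ A j) ≤ μ {ω | X i ω > z} * μ {ω | X j ω > z} := by
      intro i j hne
      rw [← pairIndep i j (Ne.symm hne) z z]
      refine measure_mono ?_
      rintro ω ⟨hω1, hω2⟩
      simp only [hA, Set.mem_iInter, Set.mem_setOf_eq] at hω1 hω2
      constructor
      · have := hω1 i; simpa using this
      · have := hω2 j; simpa using this
    -- Bonferroni and conversion to ℝ
    have hbon := bonferroni_aux μ Finset.univ A hAms
    have hUsub : (⋃ i ∈ (Finset.univ : Finset (Fin n)), A i) ⊆ {ω | (∑ k, X k ω) > x} :=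
      Set.iUnion₂_subset fun i _ => hsub i
    have hCinne : ∀ i, (∑ j ∈ Finset.univ.erase i, μ (A i ∩ A j)) ≠ ⊤ :=
      fun i => (ENNReal.sum_lt_top.2 fun j _ => measure_lt_top μ _).ne
    have hCne : (∑ i, ∑ j ∈ Finset.univ.erase i, μ (A i ∩ A j)) ≠ ⊤ :=
      (ENNReal.sum_lt_top.2 fun i _ => (hCinne i).lt_top).ne
    have hreal : ∑ i, (μ (A i)).toReal ≤ P x +
        ∑ i, ∑ j ∈ Finset.univ.erase i, (μ (A i ∩ A j)).toReal := by
      have h := ENNReal.toReal_mono (ENNReal.add_ne_top.2 ⟨hfin _, hCne⟩) hbon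
      rw [ENNReal.toReal_sum (fun i _ => hfin _), ENNReal.toReal_add (hfin _) hCne,
        ENNReal.toReal_sum (fun i _ => hCinne i)] at h
      have hU : (μ (⋃ i ∈ (Finset.univ : Finset (Fin n)), A i)).toReal ≤ P x :=
        ENNReal.toReal_mono (hfin _) (measure_mono hUsub)
      have hC2 : ∑ i, (∑ j ∈ Finset.univ.erase i, μ (A i ∩ A j)).toReal =
          ∑ i, ∑ j ∈ Finset.univ.erase i, (μ (A i ∩ A j)).toReal :=
        Finset.sum_congr rfl fun i _ => ENNReal.toReal_sum (fun j _ => hfin _)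
      rw [hC2] at h
      linarith
    have hcrossR : ∀ i, ∀ j ∈ Finset.univ.erase i,
        (μ (A i ∩ A j)).toReal ≤ T i x * (ε/(4*n)) := by
      intro i j hj
      have h' := hcross i j (Finset.ne_of_mem_erase hj)
      have h'' : (μ (A i ∩ A j)).toReal ≤ T i z * T j z := by
        have := ENNReal.toReal_mono (ENNReal.mul_ne_top (hfin _) (hfin _)) h'
        rwa [ENNReal.toReal_mul] at this
      have hTiz : T i z ≤ T i x := hanti i hzx
      have hTjz : T j z ≤ ε/(4*n) := h2 j
      nlinarith [hTnn i z, hTnn j z, hTnn i x]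
    have hCbound : ∑ i, ∑ j ∈ Finset.univ.erase i, (μ (A i ∩ A j)).toReal
        ≤ (ε/4) * S x := by
      calc ∑ i, ∑ j ∈ Finset.univ.erase i, (μ (A i ∩ A j)).toReal
          ≤ ∑ i, ∑ _j ∈ Finset.univ.erase i, T i x * (ε/(4*n)) :=
            Finset.sum_le_sum fun i _ => Finset.sum_le_sum (hcrossR i)
        _ = ∑ i, ((Finset.univ.erase i).card : ℝ) * (T i x * (ε/(4*n))) := by
            refine Finset.sum_congr rfl fun i _ => ?_
            rw [Finset.sum_const, nsmul_eq_mul]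
        _ ≤ ∑ i, (n:ℝ) * (T i x * (ε/(4*n))) := by
            refine Finset.sum_le_sum fun i _ => ?_
            have hcard : (((Finset.univ.erase i).card : ℕ) : ℝ) ≤ (n:ℝ) := by
              have h' : (Finset.univ.erase i).card ≤ n := by
                simpa [Finset.card_univ] using
                  Finset.card_erase_le (s := (Finset.univ : Finset (Fin n))) (a := i)
              exact_mod_cast h'
            have : (0:ℝ) ≤ T i x * (ε/(4*n)) :=
              mul_nonneg (hTnn i x) (by positivity)
            nlinarith
        _ = (ε/4) * S x := by
            rw [hSdef]
            rw [Finset.mul_sum]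
            refine Finset.sum_congr rfl fun i _ => ?_
            field_simp
    have hZlow : S x ≤ (1 + ε/4) * ∑ i, T i z := by
      calc S x = ∑ i, T i x := rfl
        _ ≤ ∑ i, (1 + ε/4) * T i z := Finset.sum_le_sum fun i _ => h1 i
        _ = (1 + ε/4) * ∑ i, T i z := by rw [← Finset.mul_sum]
    have hAsum : (1 - ε/4) * ∑ i, T i z ≤ ∑ i, (μ (A i)).toReal := by
      calc (1 - ε/4) * ∑ i, T i z = ∑ i, (1 - ε/4) * T i z := by rw [← Finset.mul_sum]
        _ ≤ ∑ i, (μ (A i)).toReal := Finset.sum_le_sum fun i _ => hAlow i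
    have hZnn : (0:ℝ) ≤ ∑ i, T i z := Finset.sum_nonneg fun i _ => hTnn i z
    have hSx := hSpos x
    have hkey1 : (1 - 3*ε/4) * S x ≤ (1 - 3*ε/4) * ((1 + ε/4) * ∑ i, T i z) :=
      mul_le_mul_of_nonneg_left hZlow (by linarith)
    nlinarith [hreal, hCbound, hAsum, hZnn, hSx, hkey1,
      mul_nonneg hZnn (mul_nonneg hε0.le hε0.le), mul_nonneg hZnn hε0.le]
  exact tendsto_ratio_one hSpos fun ε hε => (lower ε hε).and (upper ε hε)
end

section
/- Let ξ₁, ξ₂, … be independent real-valued random variables and η a counting random variable (integer-valued, nonnegative, nondegenerate at zero) independent of the ξ's. Define ξ_{(η)} = max{0, ξ₁, …, ξ_η} (with ξ_{(0)} = 0). Suppose: (a) F_{ξ_ϰ} ∈ 𝒞 for some ϰ in the support of η; (b) for each k ≠ ϰ, either F_{ξ_k} ∈ 𝒞 or F̄_{ξ_k}(x) = o(F̄_{ξ_ϰ}(x)); (c) limsup_{x→∞} sup_{n≥1} (1/(φ(n) F̄_{ξ_ϰ}(x))) Σ_{k=1}^n F̄_{ξ_k}(x) < ∞, where φ: ℕ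 → (0,∞) satisfies E(φ(η)·1_{{η≥1}}) < ∞. Then the distribution function of ξ_{(η)} belongs to 𝒞. -/
open Filter MeasureTheory ProbabilityTheory

/-- `runningMax ξ n ω = max {0, ξ 1 ω, …, ξ n ω}`. -/
noncomputable def runningMax {Ω : Type*} (ξ : ℕ → Ω → ℝ) : ℕ → Ω → ℝ
  | 0 => fun _ => 0
  | n + 1 => fun ω => max (runningMax ξ n ω) (ξ (n + 1) ω)

section Aux

private lemma runningMax_eq_comp {Ω : Type*} (ξ : ℕ → Ω → ℝ) (n : ℕ) (ω : Ω) :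
    runningMax ξ n ω = runningMax (fun k (v : ℕ → ℝ) => v k) n (fun k => ξ k ω) := by
  induction n with
  | zero => rfl
  | succ n ih => simp only [runningMax, ih]

private lemma measurable_runningMax_pi (n : ℕ) :
    Measurable (runningMax (fun k (v : ℕ → ℝ) => v k) n) := by
  induction n with
  | zero => exact measurable_const
  | succ n ih => exact Measurable.max ih (measurable_pi_apply _)

private lemma measurable_runningMax {Ω : Type*} [MeasurableSpace Ω] (ξ : ℕ → Ω → ℝ)
    (h : ∀ k, Measurable (ξ k)) (n : ℕ) : Measurable (runningMax ξ n) := by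
  induction n with
  | zero => exact measurable_const
  | succ n ih => exact Measurable.max ih (h (n + 1))

private lemma le_runningMax {Ω : Type*} (ξ : ℕ → Ω → ℝ) {k n : ℕ} (h1 : 1 ≤ k) (h2 : k ≤ n)
    (ω : Ω) : ξ k ω ≤ runningMax ξ n ω := by
  induction n with
  | zero => omega
  | succ n ih =>
    rcases Nat.lt_or_ge k (n + 1) with h | h
    · exact le_trans (ih (by omega)) (le_max_left _ _)
    · have hk : k = n + 1 := by omega
      subst hk
      exact le_max_right _ _

private lemma exists_index_of_runningMax_gt {Ω : Type*} (ξ : ℕ → Ω → ℝ) {x : ℝ} {n : ℕ} {ω : Ω}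
    (hx : 0 ≤ x) (h : x < runningMax ξ n ω) : ∃ k, 1 ≤ k ∧ k ≤ n ∧ x < ξ k ω := by
  induction n with
  | zero =>
    simp only [runningMax] at h
    linarith
  | succ n ih =>
    have h' : x < max (runningMax ξ n ω) (ξ (n + 1) ω) := h
    rcases lt_max_iff.mp h' with h'' | h''
    · obtain ⟨k, a, b, c⟩ := ih h''
      exact ⟨k, a, by omega, c⟩
    · exact ⟨n + 1, by omega, le_rfl, h''⟩

/-- A consistently varying tail gives a uniform eventual ratio bound for `y` near `1`. -/
private lemma cv_band {T : ℝ → ℝ} (hT : ConsistentlyVaryingTail T) (hTpos : ∀ x, 0 < T x)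
    {ε : ℝ} (hε : 0 < ε) :
    ∃ δ > 0, ∀ y : ℝ, 1 - δ < y → y < 1 → ∀ᶠ x in atTop, T (x * y) ≤ (1 + ε) * T x := by
  have h1 : ∀ᶠ y in nhdsWithin 1 (Set.Iio 1),
      limsup (fun x : ℝ => T (x * y) / T x) atTop ∈ Set.Ioo (1 / 2 : ℝ) (1 + ε) :=
    hT (Ioo_mem_nhds (by norm_num) (by linarith))
  rw [Filter.Eventually, Metric.mem_nhdsWithin_iff] at h1
  obtain ⟨δ, hδ, h2⟩ := h1
  refine ⟨δ, hδ, fun y hy1 hy2 => ?_⟩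
  have hymem : y ∈ Metric.ball (1 : ℝ) δ ∩ Set.Iio 1 := by
    constructor
    · rw [Metric.mem_ball, Real.dist_eq, abs_lt]
      constructor <;> linarith
    · exact hy2
  have hy : limsup (fun x : ℝ => T (x * y) / T x) atTop ∈ Set.Ioo (1 / 2 : ℝ) (1 + ε) := h2 hymem
  have hbdd : IsBoundedUnder (· ≤ ·) atTop (fun x : ℝ => T (x * y) / T x) := by
    rcases Set.eq_empty_or_nonempty
        {a : ℝ | ∀ᶠ x : ℝ in atTop, T (x * y) / T x ≤ a} with he | ⟨b, hb⟩
    · exfalso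
      have hls : limsup (fun x : ℝ => T (x * y) / T x) atTop = 0 := by
        rw [limsup_eq, he, Real.sInf_empty]
      rw [hls] at hy
      have := hy.1
      norm_num at this
    · exact ⟨b, eventually_map.mpr hb⟩
  have h3 : ∀ᶠ x : ℝ in atTop, T (x * y) / T x < 1 + ε :=
    eventually_lt_of_limsup_lt hy.2 hbdd
  filter_upwards [h3] with x hx
  have := (div_lt_iff₀ (hTpos x)).mp hx
  linarith

/-- A consistently varying tail (in the Lean sense) is everywhere positive,
given nonnegativity and antitonicity. -/
private lemma cv_pos {T : ℝ → ℝ} (hT : ConsistentlyVaryingTail T) (h0 : ∀ x, 0 ≤ T x)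
    (hanti : Antitone T) : ∀ x, 0 < T x := by
  by_contra h
  push_neg at h
  obtain ⟨x0, hx0⟩ := h
  have hz : ∀ x, x0 ≤ x → T x = 0 := fun x hx => le_antisymm ((hanti hx).trans hx0) (h0 x)
  have hlim : ∀ y : ℝ, limsup (fun x : ℝ => T (x * y) / T x) atTop = (0 : ℝ) := by
    intro y
    have hev : ∀ᶠ x : ℝ in atTop, T (x * y) / T x = (0 : ℝ) := by
      filter_upwards [eventually_ge_atTop x0] with x hx
      rw [hz x hx, div_zero]
    calc limsup (fun x : ℝ => T (x * y) / T x) atTop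
        = limsup (fun _ : ℝ => (0 : ℝ)) atTop := limsup_congr hev
      _ = 0 := limsup_const 0
  have ht0 : Tendsto (fun _ : ℝ => (0 : ℝ)) (nhdsWithin 1 (Set.Iio 1)) (nhds 1) :=
    Tendsto.congr hlim hT
  have h10 := tendsto_nhds_unique ht0 tendsto_const_nhds
  norm_num at h10

private lemma o_band {T S : ℝ → ℝ} (hS : ∀ x, 0 < S x)
    (h : Tendsto (fun x => T x / S x) atTop (nhds 0)) {δ : ℝ} (hδ : 0 < δ) :
    ∀ᶠ x in atTop, T x ≤ δ * S x := by
  have h1 : ∀ᶠ x in atTop, T x / S x < δ := (tendsto_order.1 h).2 δ hδ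
  filter_upwards [h1] with x hx
  have := (div_lt_iff₀ (hS x)).mp hx
  linarith

set_option maxHeartbeats 1000000 in
/-- The purely real-analytic core of the theorem. -/
private lemma cvar_aux (Fk : ℕ → ℝ → ℝ) (Pn : ℕ → ℝ → ℝ) (p : ℕ → ℝ) (G : ℝ → ℝ)
    (ϰ : ℕ) (φ : ℕ → ℝ) (C : ℝ)
    (hFk0 : ∀ k x, 0 ≤ Fk k x)
    (hFkanti : ∀ k, Antitone (Fk k))
    (hFϰpos : ∀ x, 0 < Fk ϰ x)
    (hPn0 : ∀ n x, 0 ≤ Pn n x)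
    (hPnzero : ∀ x : ℝ, 0 < x → Pn 0 x = 0)
    (hFP : ∀ x, Fk ϰ x ≤ Pn ϰ x)
    (hunion : ∀ n (x : ℝ), 0 ≤ x → Pn n x ≤ ∑ k ∈ Finset.Icc 1 n, Fk k x)
    (hover : ∀ n (a b : ℝ), 0 < a → a ≤ b →
      Pn n a ≤ Pn n b + ∑ k ∈ Finset.Icc 1 n, (Fk k a - Fk k b))
    (hp0 : ∀ n, 0 ≤ p n)
    (hpsum : Summable p) (hpsum1 : ∑' n, p n ≤ 1)
    (hpϰ : 0 < p ϰ)
    (hsummand : ∀ x, Summable (fun n => p n * Pn n x))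
    (hGdef : ∀ x, G x = ∑' n, p n * Pn n x)
    (hGanti : Antitone G)
    (ha : ConsistentlyVaryingTail (Fk ϰ))
    (hb : ∀ k : ℕ, 1 ≤ k → k ≠ ϰ → ConsistentlyVaryingTail (Fk k) ∨
        Tendsto (fun x : ℝ => Fk k x / Fk ϰ x) atTop (nhds 0))
    (hφpos : ∀ n, 0 < φ n)
    (hφη : Summable (fun n : ℕ => φ (n + 1) * p (n + 1)))
    (hC : ∀ᶠ x : ℝ in atTop, ∀ n, 1 ≤ n → (∑ k ∈ Finset.Icc 1 n, Fk k x) ≤ C * (φ n * Fk ϰ x))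
    (hC0 : 0 ≤ C) :
    ConsistentlyVaryingTail G := by
  classical
  have hGF : ∀ x, p ϰ * Fk ϰ x ≤ G x := by
    intro x
    have h1 : p ϰ * Pn ϰ x ≤ G x := by
      rw [hGdef x]
      exact Summable.le_tsum (hsummand x) ϰ fun j _ => mul_nonneg (hp0 j) (hPn0 j x)
    have h2 : p ϰ * Fk ϰ x ≤ p ϰ * Pn ϰ x := mul_le_mul_of_nonneg_left (hFP x) hpϰ.le
    linarith
  have hGpos : ∀ x, 0 < G x := fun x =>
    lt_of_lt_of_le (mul_pos hpϰ (hFϰpos x)) (hGF x)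
  obtain ⟨Φ, hΦdef⟩ : ∃ v : ℝ, v = ∑' n, φ (n + 1) * p (n + 1) := ⟨_, rfl⟩
  have hΦ0 : 0 ≤ Φ := by
    rw [hΦdef]
    exact tsum_nonneg fun n => mul_nonneg (hφpos _).le (hp0 _)
  obtain ⟨D, hDdef⟩ : ∃ v : ℝ, v = C * Φ + 1 + 2 * C := ⟨_, rfl⟩
  have hD1 : 1 ≤ D := by
    rw [hDdef]
    nlinarith [mul_nonneg hC0 hΦ0]
  have hDpos : 0 < D := by linarith
  rw [ConsistentlyVaryingTail, Metric.tendsto_nhdsWithin_nhds]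
  intro ε0 hε0
  obtain ⟨ε, hεpos, hεM⟩ : ∃ ε : ℝ, 0 < ε ∧ ε * D / p ϰ ≤ ε0 / 2 := by
    refine ⟨ε0 * p ϰ / (2 * D), by positivity, ?_⟩
    have heq : ε0 * p ϰ / (2 * D) * D / p ϰ = ε0 / 2 := by
      field_simp
    exact heq.le
  -- choose the cut point K0
  obtain ⟨K0, hK0⟩ : ∃ K : ℕ, ∑' n : ℕ, φ (n + K + 1) * p (n + K + 1) ≤ ε := by
    have ht := tendsto_sum_nat_add (fun n : ℕ => φ (n + 1) * p (n + 1))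
    have hev : ∀ᶠ i : ℕ in atTop,
        (∑' k : ℕ, φ (k + i + 1) * p (k + i + 1)) < ε := (tendsto_order.1 ht).2 ε hεpos
    obtain ⟨K, hK⟩ := hev.exists
    exact ⟨K, hK.le⟩
  -- the coarse band for ϰ
  obtain ⟨δϰ, hδϰpos, hδϰ⟩ := cv_band ha hFϰpos (ε := 1) one_pos
  -- per-k bands
  have hbands : ∀ k : ℕ, ∃ δk : ℝ, 0 < δk ∧ (1 ≤ k → ∀ y : ℝ, 1 - δk < y → y < 1 →
      1 - min δϰ (1 / 2) < y →
      ∀ᶠ x in atTop, Fk k (x * y) - Fk k x ≤ ε * Fk k x + (ε / (K0 + 1)) * Fk ϰ x) := by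
    intro k
    rcases Nat.lt_or_ge k 1 with hk | hk
    · exact ⟨1, one_pos, fun h => absurd h (by omega)⟩
    rcases eq_or_ne k ϰ with rfl | hkϰ
    · obtain ⟨δ', hδ'pos, hδ'⟩ := cv_band ha hFϰpos hεpos
      refine ⟨δ', hδ'pos, fun _ y hy1 hy2 _ => ?_⟩
      filter_upwards [hδ' y hy1 hy2] with x hx
      have h0 : 0 ≤ (ε / (K0 + 1)) * Fk k x := mul_nonneg (by positivity) (hFk0 _ _)
      linarith
    rcases hb k hk hkϰ with hcv | ho
    · have hkpos : ∀ x, 0 < Fk k x := cv_pos hcv (hFk0 k) (hFkanti k)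
      obtain ⟨δk, hδkpos, hδk⟩ := cv_band hcv hkpos hεpos
      refine ⟨δk, hδkpos, fun _ y hy1 hy2 _ => ?_⟩
      filter_upwards [hδk y hy1 hy2] with x hx
      have h0 : 0 ≤ (ε / (K0 + 1)) * Fk ϰ x := mul_nonneg (by positivity) (hFk0 _ _)
      linarith
    · refine ⟨1, one_pos, fun _ y hy1 hy2 hy3 => ?_⟩
      have hmin1 : min δϰ (1 / 2 : ℝ) ≤ δϰ := min_le_left _ _
      have hmin2 : min δϰ (1 / 2 : ℝ) ≤ 1 / 2 := min_le_right _ _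
      have hy4 : 1 - δϰ < y := by linarith
      have hy5 : (0 : ℝ) < y := by linarith
      have hxy : Tendsto (fun x : ℝ => x * y) atTop atTop :=
        Tendsto.atTop_mul_const hy5 tendsto_id
      have hsm := o_band hFϰpos ho (δ := ε / (2 * (K0 + 1))) (by positivity)
      filter_upwards [hxy.eventually hsm, hδϰ y hy4 hy2] with x h1 h2
      have h3 : 0 ≤ Fk k x := hFk0 k x
      have h4 : 0 ≤ ε * Fk k x := mul_nonneg hεpos.le h3
      have h5 : (ε / (2 * (K0 + 1))) * Fk ϰ (x * y)
          ≤ (ε / (2 * (K0 + 1))) * ((1 + 1) * Fk ϰ x) :=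
        mul_le_mul_of_nonneg_left h2 (by positivity)
      have h6 : (ε / (2 * ((K0 : ℝ) + 1))) * ((1 + 1) * Fk ϰ x)
          = (ε / ((K0 : ℝ) + 1)) * Fk ϰ x := by
        field_simp
        ring
      have h7 : Fk k (x * y) ≤ (ε / ((K0 : ℝ) + 1)) * Fk ϰ x := by
        calc Fk k (x * y) ≤ (ε / (2 * ((K0 : ℝ) + 1))) * Fk ϰ (x * y) := h1
          _ ≤ (ε / (2 * ((K0 : ℝ) + 1))) * ((1 + 1) * Fk ϰ x) := h5
          _ = (ε / ((K0 : ℝ) + 1)) * Fk ϰ x := h6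
      linarith
  choose δf hδfpos hδf using hbands
  -- the global δ
  have hIccne : (Finset.Icc 0 K0).Nonempty := ⟨0, Finset.mem_Icc.mpr ⟨le_rfl, Nat.zero_le _⟩⟩
  obtain ⟨δ, hδpos, hδleϰ, hδhalf, hδlek⟩ :
      ∃ δ : ℝ, 0 < δ ∧ δ ≤ δϰ ∧ δ ≤ 1 / 2 ∧ ∀ k ∈ Finset.Icc 0 K0, δ ≤ δf k := by
    refine ⟨min (min δϰ (1 / 2)) ((Finset.Icc 0 K0).inf' hIccne δf), ?_, ?_, ?_, ?_⟩
    · refine lt_min (lt_min hδϰpos (by norm_num)) ?_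
      rw [Finset.lt_inf'_iff]
      exact fun k _ => hδfpos k
    · exact le_trans (min_le_left _ _) (min_le_left _ _)
    · exact le_trans (min_le_left _ _) (min_le_right _ _)
    · exact fun k hk => le_trans (min_le_right _ _) (Finset.inf'_le δf hk)
  refine ⟨δ, hδpos, fun y hymem hdist => ?_⟩
  have hy2 : y < 1 := hymem
  have hy1 : 1 - δ < y := by
    rw [Real.dist_eq, abs_lt] at hdist
    linarith [hdist.1]
  have hyϰ : 1 - δϰ < y := by linarith
  have hymin : 1 - min δϰ (1 / 2) < y := by
    rcases le_or_gt δϰ (1 / 2 : ℝ) with h | h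
    · rw [min_eq_left h]; linarith
    · rw [min_eq_right h.le]; linarith
  have hy0 : (0 : ℝ) < y := by linarith
  have hxytendsto : Tendsto (fun x : ℝ => x * y) atTop atTop :=
    Tendsto.atTop_mul_const hy0 tendsto_id
  -- collect eventual facts
  have hEk : ∀ k ∈ Finset.Icc 1 K0, ∀ᶠ x : ℝ in atTop,
      Fk k (x * y) - Fk k x ≤ ε * Fk k x + (ε / (K0 + 1)) * Fk ϰ x := by
    intro k hkm
    rw [Finset.mem_Icc] at hkm
    have hyk : 1 - δf k < y := by
      have := hδlek k (Finset.mem_Icc.mpr ⟨Nat.zero_le _, hkm.2⟩)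
      linarith
    exact hδf k hkm.1 y hyk hy2 hymin
  have hE5 : ∀ᶠ x : ℝ in atTop, ∀ k ∈ Finset.Icc 1 K0,
      Fk k (x * y) - Fk k x ≤ ε * Fk k x + (ε / (K0 + 1)) * Fk ϰ x :=
    (eventually_all_finset _).mpr hEk
  have hE3 : ∀ᶠ x : ℝ in atTop, ∀ n, 1 ≤ n →
      (∑ k ∈ Finset.Icc 1 n, Fk k (x * y)) ≤ C * (φ n * Fk ϰ (x * y)) :=
    hxytendsto.eventually hC
  have hE4 : ∀ᶠ x : ℝ in atTop, Fk ϰ (x * y) ≤ (1 + 1) * Fk ϰ x := hδϰ y hyϰ hy2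
  -- an opaque replacement for `φ` vanishing at 0
  obtain ⟨φ', hφ'0, hφ'eq⟩ : ∃ g : ℕ → ℝ, g 0 = 0 ∧ ∀ n, n ≠ 0 → g n = φ n :=
    ⟨fun n => if n = 0 then 0 else φ n, rfl, fun n hn => if_neg hn⟩
  -- the main eventual bound
  have hmain : ∀ᶠ x : ℝ in atTop, G (x * y) / G x ≤ 1 + ε * D / p ϰ := by
    filter_upwards [eventually_ge_atTop (1 : ℝ), hC, hE3, hE4, hE5] with x hx1 hx2 hx3 hx4 hx5
    have hx0 : (0 : ℝ) < x := by linarith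
    have hxypos : 0 < x * y := mul_pos hx0 hy0
    have hxyle : x * y ≤ x := by nlinarith
    -- per-n bound for small n
    have hn : ∀ n ∈ Finset.range (K0 + 1),
        p n * Pn n (x * y) ≤ p n * Pn n x
          + ε * C * Fk ϰ x * (φ' n * p n) + ε * Fk ϰ x * p n := by
      intro n hnmem
      rcases Nat.eq_zero_or_pos n with rfl | hn1
      · rw [hPnzero _ hxypos, mul_zero, hφ'0]
        have h1 : 0 ≤ p 0 * Pn 0 x := mul_nonneg (hp0 0) (hPn0 0 x)
        have h3 : 0 ≤ ε * Fk ϰ x * p 0 :=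
          mul_nonneg (mul_nonneg hεpos.le (hFk0 ϰ x)) (hp0 0)
        nlinarith
      · have hnK : n ≤ K0 := by
          rw [Finset.mem_range] at hnmem
          omega
        have h1 := hover n (x * y) x hxypos hxyle
        have h2 : ∑ k ∈ Finset.Icc 1 n, (Fk k (x * y) - Fk k x)
            ≤ ∑ k ∈ Finset.Icc 1 n, (ε * Fk k x + (ε / (K0 + 1)) * Fk ϰ x) := by
          apply Finset.sum_le_sum
          intro k hk
          rw [Finset.mem_Icc] at hk
          exact hx5 k (Finset.mem_Icc.mpr ⟨hk.1, hk.2.trans hnK⟩)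
        have h3 : ∑ k ∈ Finset.Icc 1 n, (ε * Fk k x + (ε / (K0 + 1)) * Fk ϰ x)
            = ε * (∑ k ∈ Finset.Icc 1 n, Fk k x) + (n : ℝ) * ((ε / (K0 + 1)) * Fk ϰ x) := by
          rw [Finset.sum_add_distrib, ← Finset.mul_sum, Finset.sum_const, Nat.card_Icc]
          simp [nsmul_eq_mul]
        have h4 : (∑ k ∈ Finset.Icc 1 n, Fk k x) ≤ C * (φ n * Fk ϰ x) := hx2 n hn1
        have h5 : (n : ℝ) * ((ε / (K0 + 1)) * Fk ϰ x) ≤ ε * Fk ϰ x := by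
          have hn' : (n : ℝ) ≤ (K0 : ℝ) + 1 := by
            have : (n : ℝ) ≤ (K0 : ℝ) := by exact_mod_cast hnK
            linarith
          have e1 : (n : ℝ) * (ε / ((K0 : ℝ) + 1)) ≤ ((K0 : ℝ) + 1) * (ε / ((K0 : ℝ) + 1)) :=
            mul_le_mul_of_nonneg_right hn' (by positivity)
          have e2 : ((K0 : ℝ) + 1) * (ε / ((K0 : ℝ) + 1)) = ε := by
            field_simp
          have e3 := mul_le_mul_of_nonneg_right (e1.trans_eq e2) (hFk0 ϰ x)
          calc (n : ℝ) * ((ε / ((K0 : ℝ) + 1)) * Fk ϰ x)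
              = ((n : ℝ) * (ε / ((K0 : ℝ) + 1))) * Fk ϰ x := by ring
            _ ≤ ε * Fk ϰ x := e3
        have h6 : Pn n (x * y) ≤ Pn n x + (ε * (C * φ n) + ε) * Fk ϰ x := by
          have h7 : ε * (∑ k ∈ Finset.Icc 1 n, Fk k x) ≤ ε * (C * (φ n * Fk ϰ x)) :=
            mul_le_mul_of_nonneg_left h4 hεpos.le
          nlinarith
        have h8 : φ' n = φ n := hφ'eq n (by omega)
        have h9 := mul_le_mul_of_nonneg_left h6 (hp0 n)
        rw [h8]
        nlinarith
    -- sum over small n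
    have hφ'sum : ∑ n ∈ Finset.range (K0 + 1), φ' n * p n ≤ Φ := by
      have e1 : ∑ n ∈ Finset.range (K0 + 1), φ' n * p n
          = (∑ n ∈ Finset.range K0, φ' (n + 1) * p (n + 1)) + φ' 0 * p 0 :=
        Finset.sum_range_succ' _ _
      have e2 : (∑ n ∈ Finset.range K0, φ' (n + 1) * p (n + 1))
          = ∑ n ∈ Finset.range K0, φ (n + 1) * p (n + 1) :=
        Finset.sum_congr rfl fun n _ => by rw [hφ'eq (n + 1) (by omega)]
      rw [e1, e2, hφ'0, zero_mul, add_zero, hΦdef]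
      exact Summable.sum_le_tsum _ (fun j _ => mul_nonneg (hφpos _).le (hp0 _)) hφη
    have hpsumK : ∑ n ∈ Finset.range (K0 + 1), p n ≤ 1 :=
      le_trans (Summable.sum_le_tsum _ (fun j _ => hp0 j) hpsum) hpsum1
    have hfin : ∑ n ∈ Finset.range (K0 + 1), p n * Pn n (x * y)
        ≤ G x + (ε * (C * Φ) + ε) * Fk ϰ x := by
      have hs := Finset.sum_le_sum hn
      have hA : ∑ n ∈ Finset.range (K0 + 1), p n * Pn n x ≤ G x := by
        rw [hGdef x]
        exact Summable.sum_le_tsum _ (fun j _ => mul_nonneg (hp0 j) (hPn0 j x)) (hsummand x)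
      have hsplit3 : ∑ n ∈ Finset.range (K0 + 1),
          (p n * Pn n x + ε * C * Fk ϰ x * (φ' n * p n) + ε * Fk ϰ x * p n)
          = (∑ n ∈ Finset.range (K0 + 1), p n * Pn n x)
            + ε * C * Fk ϰ x * (∑ n ∈ Finset.range (K0 + 1), φ' n * p n)
            + ε * Fk ϰ x * (∑ n ∈ Finset.range (K0 + 1), p n) := by
        rw [Finset.sum_add_distrib, Finset.sum_add_distrib, ← Finset.mul_sum, ← Finset.mul_sum]
      have hB : ε * C * Fk ϰ x * (∑ n ∈ Finset.range (K0 + 1), φ' n * p n)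
          ≤ ε * C * Fk ϰ x * Φ :=
        mul_le_mul_of_nonneg_left hφ'sum
          (mul_nonneg (mul_nonneg hεpos.le hC0) (hFk0 ϰ x))
      have hB2 : ε * Fk ϰ x * (∑ n ∈ Finset.range (K0 + 1), p n) ≤ ε * Fk ϰ x * 1 :=
        mul_le_mul_of_nonneg_left hpsumK (mul_nonneg hεpos.le (hFk0 ϰ x))
      rw [hsplit3] at hs
      nlinarith
    -- tail bound
    have htail : (∑' n : ℕ, p (n + (K0 + 1)) * Pn (n + (K0 + 1)) (x * y))
        ≤ ε * (2 * C) * Fk ϰ x := by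
      have hsummL : Summable fun n : ℕ => p (n + (K0 + 1)) * Pn (n + (K0 + 1)) (x * y) :=
        (summable_nat_add_iff (K0 + 1)).mpr (hsummand (x * y))
      have hsummR0 : Summable fun n : ℕ => φ (n + K0 + 1) * p (n + K0 + 1) :=
        (summable_nat_add_iff K0).mpr hφη
      have hsummR : Summable fun n : ℕ =>
          (C * Fk ϰ (x * y)) * (φ (n + K0 + 1) * p (n + K0 + 1)) :=
        hsummR0.mul_left _
      have hle : ∀ n : ℕ, p (n + (K0 + 1)) * Pn (n + (K0 + 1)) (x * y)
          ≤ (C * Fk ϰ (x * y)) * (φ (n + K0 + 1) * p (n + K0 + 1)) := by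
        intro n
        have hm1 : 1 ≤ n + (K0 + 1) := by omega
        have h1 : Pn (n + (K0 + 1)) (x * y)
            ≤ ∑ k ∈ Finset.Icc 1 (n + (K0 + 1)), Fk k (x * y) := hunion _ _ hxypos.le
        have h2 : (∑ k ∈ Finset.Icc 1 (n + (K0 + 1)), Fk k (x * y))
            ≤ C * (φ (n + (K0 + 1)) * Fk ϰ (x * y)) := hx3 _ hm1
        have h3 := mul_le_mul_of_nonneg_left (h1.trans h2) (hp0 (n + (K0 + 1)))
        have h4 : n + (K0 + 1) = n + K0 + 1 := by omega
        rw [h4] at h3 ⊢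
        nlinarith
      have h5 := Summable.tsum_le_tsum hle hsummL hsummR
      have h6 : (∑' n : ℕ, (C * Fk ϰ (x * y)) * (φ (n + K0 + 1) * p (n + K0 + 1)))
          = (C * Fk ϰ (x * y)) * ∑' n : ℕ, φ (n + K0 + 1) * p (n + K0 + 1) := tsum_mul_left
      have h7 : 0 ≤ C * Fk ϰ (x * y) := mul_nonneg hC0 (hFk0 _ _)
      have h8 : (C * Fk ϰ (x * y)) * (∑' n : ℕ, φ (n + K0 + 1) * p (n + K0 + 1))
          ≤ (C * Fk ϰ (x * y)) * ε := mul_le_mul_of_nonneg_left hK0 h7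
      have h9 : (C * Fk ϰ (x * y)) * ε ≤ (C * ((1 + 1) * Fk ϰ x)) * ε := by
        have h10 := mul_le_mul_of_nonneg_left hx4 hC0
        nlinarith
      calc (∑' n : ℕ, p (n + (K0 + 1)) * Pn (n + (K0 + 1)) (x * y))
          ≤ (∑' n : ℕ, (C * Fk ϰ (x * y)) * (φ (n + K0 + 1) * p (n + K0 + 1))) := h5
        _ = (C * Fk ϰ (x * y)) * ∑' n : ℕ, φ (n + K0 + 1) * p (n + K0 + 1) := h6
        _ ≤ (C * Fk ϰ (x * y)) * ε := h8
        _ ≤ (C * ((1 + 1) * Fk ϰ x)) * ε := h9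
        _ = ε * (2 * C) * Fk ϰ x := by ring
    -- combine
    have hsplit := Summable.sum_add_tsum_nat_add (f := fun n => p n * Pn n (x * y)) (K0 + 1)
      (hsummand (x * y))
    have hGxy : G (x * y) ≤ G x + ε * D * Fk ϰ x := by
      rw [hGdef (x * y), ← hsplit]
      have hDexp : ε * D * Fk ϰ x
          = (ε * (C * Φ) + ε) * Fk ϰ x + ε * (2 * C) * Fk ϰ x := by
        rw [hDdef]; ring
      linarith
    rw [div_le_iff₀ (hGpos x)]
    have h7 : ε * D * Fk ϰ x ≤ ε * D / p ϰ * G x := by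
      have h8 := hGF x
      have h9 : ε * D * Fk ϰ x = ε * D / p ϰ * (p ϰ * Fk ϰ x) := by
        field_simp
      rw [h9]
      exact mul_le_mul_of_nonneg_left h8 (by positivity)
    have h10 : (1 + ε * D / p ϰ) * G x = G x + ε * D / p ϰ * G x := by ring
    linarith
  -- eventual lower bound 1
  have hlow : ∀ᶠ x : ℝ in atTop, 1 ≤ G (x * y) / G x := by
    filter_upwards [eventually_ge_atTop (1 : ℝ)] with x hx
    have hx0 : (0 : ℝ) < x := by linarith
    have hxyle : x * y ≤ x := by nlinarith
    exact (one_le_div (hGpos x)).mpr (hGanti hxyle)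
  have hub : limsup (fun x : ℝ => G (x * y) / G x) atTop ≤ 1 + ε * D / p ϰ :=
    limsup_le_of_le (IsCoboundedUnder.of_frequently_ge hlow.frequently) hmain
  have hlb : 1 ≤ limsup (fun x : ℝ => G (x * y) / G x) atTop :=
    le_limsup_of_frequently_le hlow.frequently (isBoundedUnder_of_eventually_le hmain)
  rw [Real.dist_eq, abs_lt]
  constructor
  · linarith
  · linarith

end Aux

/-- Theorem 4: the distribution function of the randomly stopped maximum
`ξ_(η) = max{0, ξ₁, …, ξ_η}` has a consistently varying tail. -/
theorem randomly_stopped_maximum_cvar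
    {Ω : Type*} [MeasurableSpace Ω] (μ : Measure Ω) [IsProbabilityMeasure μ]
    (ξ : ℕ → Ω → ℝ) (hmeas : ∀ k, Measurable (ξ k))
    (hindep : iIndepFun ξ μ)
    (η : Ω → ℕ) (hηmeas : Measurable η)
    (hηnondeg : μ {ω | η ω = 0} ≠ 1)
    (hηindep : IndepFun η (fun ω => fun k => ξ k ω) μ)
    (ϰ : ℕ) (hϰ1 : 1 ≤ ϰ) (hϰsupp : μ {ω | η ω = ϰ} ≠ 0)
    (hϰpos : ∀ x : ℝ, 0 < (μ {ω | ξ ϰ ω > x}).toReal)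
    (ha : ConsistentlyVaryingTail (fun x => (μ {ω | ξ ϰ ω > x}).toReal))
    (hb : ∀ k : ℕ, 1 ≤ k → k ≠ ϰ →
      ConsistentlyVaryingTail (fun x => (μ {ω | ξ k ω > x}).toReal) ∨
        Tendsto (fun x : ℝ =>
          (μ {ω | ξ k ω > x}).toReal / (μ {ω | ξ ϰ ω > x}).toReal) atTop (nhds 0))
    (φ : ℕ → ℝ) (hφpos : ∀ n, 0 < φ n)
    (hφη : Summable (fun n : ℕ => φ (n + 1) * (μ {ω | η ω = n + 1}).toReal))
    (hc : ∃ C : ℝ, ∀ᶠ x : ℝ in atTop, ∀ n ≥ 1,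
        (∑ k ∈ Finset.Icc 1 n, (μ {ω | ξ k ω > x}).toReal)
          / (φ n * (μ {ω | ξ ϰ ω > x}).toReal) ≤ C) :
    ConsistentlyVaryingTail (fun x => (μ {ω | runningMax ξ (η ω) ω > x}).toReal) := by
  classical
  obtain ⟨C, hC⟩ := hc
  -- abbreviations (opaque)
  obtain ⟨Fk, hFkdef⟩ : ∃ F : ℕ → ℝ → ℝ, F = fun k x => (μ {ω | ξ k ω > x}).toReal := ⟨_, rfl⟩
  obtain ⟨Pn, hPndef⟩ : ∃ P : ℕ → ℝ → ℝ,
      P = fun n x => (μ {ω | runningMax ξ n ω > x}).toReal := ⟨_, rfl⟩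
  obtain ⟨p, hpdef⟩ : ∃ q : ℕ → ℝ, q = fun n => (μ {ω | η ω = n}).toReal := ⟨_, rfl⟩
  obtain ⟨G, hGdef0⟩ : ∃ g : ℝ → ℝ,
      g = fun x => (μ {ω | runningMax ξ (η ω) ω > x}).toReal := ⟨_, rfl⟩
  rw [show (fun x => (μ {ω | runningMax ξ (η ω) ω > x}).toReal) = G from hGdef0.symm]
  -- measurability of the relevant sets
  have hmξ : ∀ k (x : ℝ), MeasurableSet {ω | ξ k ω > x} := fun k x =>
    measurableSet_lt measurable_const (hmeas k)
  have hmPn : ∀ n (x : ℝ), MeasurableSet {ω | runningMax ξ n ω > x} := fun n x =>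
    measurableSet_lt measurable_const (measurable_runningMax ξ hmeas n)
  have hmη : ∀ n, MeasurableSet {ω | η ω = n} := fun n =>
    hηmeas (measurableSet_singleton n)
  -- decomposition
  have hdecompE : ∀ x : ℝ, μ {ω | runningMax ξ (η ω) ω > x}
      = ∑' n : ℕ, μ {ω | η ω = n} * μ {ω | runningMax ξ n ω > x} := by
    intro x
    have hset : {ω | runningMax ξ (η ω) ω > x}
        = ⋃ n : ℕ, ({ω | η ω = n} ∩ {ω | runningMax ξ n ω > x}) := by
      ext ω
      simp only [Set.mem_setOf_eq, Set.mem_iUnion, Set.mem_inter_iff]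
      constructor
      · intro h
        exact ⟨η ω, rfl, h⟩
      · rintro ⟨n, hn, h⟩
        rw [hn]
        exact h
    have hdisj : Pairwise (Function.onFun Disjoint
        fun n => ({ω | η ω = n} ∩ {ω | runningMax ξ n ω > x})) := by
      intro m n hmn
      refine Set.disjoint_left.mpr ?_
      rintro ω ⟨h1, _⟩ ⟨h2, _⟩
      exact hmn (h1.symm.trans h2)
    have hmeas' : ∀ n : ℕ, MeasurableSet ({ω | η ω = n} ∩ {ω | runningMax ξ n ω > x}) :=
      fun n => (hmη n).inter (hmPn n x)
    rw [hset, measure_iUnion hdisj hmeas']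
    congr 1
    funext n
    have hpre1 : {ω | η ω = n} = η ⁻¹' {n} := by
      ext ω; simp
    have hpre2 : {ω | runningMax ξ n ω > x}
        = (fun ω => fun k => ξ k ω) ⁻¹'
          {v : ℕ → ℝ | runningMax (fun k (v : ℕ → ℝ) => v k) n v > x} := by
      ext ω
      simp only [Set.mem_setOf_eq, Set.mem_preimage]
      rw [← runningMax_eq_comp]
    rw [hpre1, hpre2]
    rw [hηindep.measure_inter_preimage_eq_mul _ _ (measurableSet_singleton n)
      (measurableSet_lt measurable_const (measurable_runningMax_pi n))]
  -- real-valued decomposition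
  have hsummand : ∀ x : ℝ, Summable (fun n => p n * Pn n x) := by
    intro x
    have hne : (∑' n : ℕ, μ {ω | η ω = n} * μ {ω | runningMax ξ n ω > x}) ≠ ⊤ := by
      rw [← hdecompE x]
      exact measure_ne_top μ _
    have h1 := ENNReal.summable_toReal hne
    refine h1.congr fun n => ?_
    rw [hpdef, hPndef, ENNReal.toReal_mul]
  have hGdef : ∀ x : ℝ, G x = ∑' n, p n * Pn n x := by
    intro x
    have h1 : G x = (∑' n : ℕ, μ {ω | η ω = n} * μ {ω | runningMax ξ n ω > x}).toReal := by
      rw [hGdef0, ← hdecompE x]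
    rw [h1, ENNReal.tsum_toReal_eq (fun n => ENNReal.mul_ne_top (measure_ne_top μ _)
      (measure_ne_top μ _))]
    exact tsum_congr fun n => by rw [hpdef, hPndef, ENNReal.toReal_mul]
  -- basic facts
  have hFk0 : ∀ k (x : ℝ), 0 ≤ Fk k x := by
    intro k x
    rw [hFkdef]
    exact ENNReal.toReal_nonneg
  have hFkanti : ∀ k, Antitone (Fk k) := by
    intro k a b hab
    rw [hFkdef]
    exact ENNReal.toReal_mono (measure_ne_top μ _)
      (measure_mono fun ω h => lt_of_le_of_lt hab h)
  have hPn0 : ∀ n (x : ℝ), 0 ≤ Pn n x := by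
    intro n x
    rw [hPndef]
    exact ENNReal.toReal_nonneg
  have hPnzero : ∀ x : ℝ, 0 < x → Pn 0 x = 0 := by
    intro x hx
    have hempty : {ω | runningMax ξ 0 ω > x} = (∅ : Set Ω) := by
      ext ω
      simp only [Set.mem_setOf_eq, Set.mem_empty_iff_false, iff_false, not_lt]
      have h0 : runningMax ξ 0 ω = 0 := rfl
      rw [h0]
      exact hx.le
    rw [hPndef]
    simp only [hempty, measure_empty, ENNReal.toReal_zero]
  have hFP : ∀ x : ℝ, Fk ϰ x ≤ Pn ϰ x := by
    intro x
    rw [hFkdef, hPndef]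
    exact ENNReal.toReal_mono (measure_ne_top μ _)
      (measure_mono fun ω h => lt_of_lt_of_le h (le_runningMax ξ hϰ1 le_rfl ω))
  have hϰpos' : ∀ x : ℝ, 0 < Fk ϰ x := by
    intro x
    rw [hFkdef]
    exact hϰpos x
  have hunion : ∀ n (x : ℝ), 0 ≤ x → Pn n x ≤ ∑ k ∈ Finset.Icc 1 n, Fk k x := by
    intro n x hx
    have hsub : {ω | runningMax ξ n ω > x}
        ⊆ ⋃ k ∈ Finset.Icc 1 n, {ω | ξ k ω > x} := by
      intro ω h
      obtain ⟨k, h1, h2, h3⟩ := exists_index_of_runningMax_gt ξ hx h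
      exact Set.mem_biUnion (Finset.mem_Icc.mpr ⟨h1, h2⟩) h3
    have hfin : (∑ k ∈ Finset.Icc 1 n, μ {ω | ξ k ω > x}) ≠ ⊤ :=
      (ENNReal.sum_lt_top.mpr fun k _ => measure_lt_top μ _).ne
    rw [hPndef, hFkdef]
    calc (μ {ω | runningMax ξ n ω > x}).toReal
        ≤ (∑ k ∈ Finset.Icc 1 n, μ {ω | ξ k ω > x}).toReal :=
          ENNReal.toReal_mono hfin
            ((measure_mono hsub).trans (measure_biUnion_finset_le _ _))
      _ = ∑ k ∈ Finset.Icc 1 n, (μ {ω | ξ k ω > x}).toReal :=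
          ENNReal.toReal_sum fun k _ => measure_ne_top μ _
  have hover : ∀ n (a b : ℝ), 0 < a → a ≤ b →
      Pn n a ≤ Pn n b + ∑ k ∈ Finset.Icc 1 n, (Fk k a - Fk k b) := by
    intro n a b ha0 hab
    have hsub : {ω | runningMax ξ n ω > a}
        ⊆ {ω | runningMax ξ n ω > b} ∪ ⋃ k ∈ Finset.Icc 1 n,
          ({ω | ξ k ω > a} \ {ω | ξ k ω > b}) := by
      intro ω h
      by_cases hB : runningMax ξ n ω > b
      · exact Set.mem_union_left _ hB
      · refine Set.mem_union_right _ ?_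
        obtain ⟨k, h1, h2, h3⟩ := exists_index_of_runningMax_gt ξ ha0.le h
        have h4 : ¬ ξ k ω > b := by
          push_neg at hB ⊢
          exact le_trans (le_runningMax ξ h1 h2 ω) hB
        exact Set.mem_biUnion (Finset.mem_Icc.mpr ⟨h1, h2⟩) ⟨h3, h4⟩
    have hdiff : ∀ k, (μ ({ω | ξ k ω > a} \ {ω | ξ k ω > b})).toReal
        = (μ {ω | ξ k ω > a}).toReal - (μ {ω | ξ k ω > b}).toReal := by
      intro k
      have hsub2 : {ω | ξ k ω > b} ⊆ {ω | ξ k ω > a} :=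
        fun ω h => lt_of_le_of_lt hab h
      rw [measure_diff hsub2 (hmξ k b).nullMeasurableSet (measure_ne_top μ _)]
      exact ENNReal.toReal_sub_of_le (measure_mono hsub2) (measure_ne_top μ _)
    have hsumfin : (∑ k ∈ Finset.Icc 1 n, μ ({ω | ξ k ω > a} \ {ω | ξ k ω > b})) ≠ ⊤ :=
      (ENNReal.sum_lt_top.mpr fun k _ => measure_lt_top μ _).ne
    have hstep : μ {ω | runningMax ξ n ω > a}
        ≤ μ {ω | runningMax ξ n ω > b}
          + ∑ k ∈ Finset.Icc 1 n, μ ({ω | ξ k ω > a} \ {ω | ξ k ω > b}) := by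
      calc μ {ω | runningMax ξ n ω > a}
          ≤ μ ({ω | runningMax ξ n ω > b} ∪ ⋃ k ∈ Finset.Icc 1 n,
            ({ω | ξ k ω > a} \ {ω | ξ k ω > b})) := measure_mono hsub
        _ ≤ μ {ω | runningMax ξ n ω > b}
            + μ (⋃ k ∈ Finset.Icc 1 n, ({ω | ξ k ω > a} \ {ω | ξ k ω > b})) :=
            measure_union_le _ _
        _ ≤ μ {ω | runningMax ξ n ω > b}
            + ∑ k ∈ Finset.Icc 1 n, μ ({ω | ξ k ω > a} \ {ω | ξ k ω > b}) := by
            gcongr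
            exact measure_biUnion_finset_le _ _
    have hfin : (μ {ω | runningMax ξ n ω > b}
        + ∑ k ∈ Finset.Icc 1 n, μ ({ω | ξ k ω > a} \ {ω | ξ k ω > b})) ≠ ⊤ :=
      ENNReal.add_ne_top.mpr ⟨measure_ne_top μ _, hsumfin⟩
    rw [hPndef, hFkdef]
    calc (μ {ω | runningMax ξ n ω > a}).toReal
        ≤ (μ {ω | runningMax ξ n ω > b}
          + ∑ k ∈ Finset.Icc 1 n, μ ({ω | ξ k ω > a} \ {ω | ξ k ω > b})).toReal :=
        ENNReal.toReal_mono hfin hstep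
      _ = (μ {ω | runningMax ξ n ω > b}).toReal
          + ∑ k ∈ Finset.Icc 1 n,
            ((μ {ω | ξ k ω > a}).toReal - (μ {ω | ξ k ω > b}).toReal) := by
        rw [ENNReal.toReal_add (measure_ne_top μ _) hsumfin,
          ENNReal.toReal_sum (fun k _ => ((measure_mono Set.diff_subset).trans_lt
            (measure_lt_top μ _)).ne)]
        congr 1
        exact Finset.sum_congr rfl fun k _ => hdiff k
  have hp0 : ∀ n, 0 ≤ p n := by
    intro n
    rw [hpdef]
    exact ENNReal.toReal_nonneg
  have hηtsum : (∑' n : ℕ, μ {ω | η ω = n}) = 1 := by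
    have huniv : (⋃ n : ℕ, {ω | η ω = n}) = (Set.univ : Set Ω) := by
      ext ω
      simp
    have hdisj : Pairwise (Function.onFun Disjoint fun n => {ω | η ω = n}) := by
      intro m n hmn
      refine Set.disjoint_left.mpr ?_
      intro ω h1 h2
      exact hmn (h1.symm.trans h2)
    rw [← measure_iUnion hdisj hmη, huniv, measure_univ]
  have hpsum : Summable p := by
    have h1 := ENNReal.summable_toReal
      (f := fun n : ℕ => μ {ω | η ω = n}) (by rw [hηtsum]; exact ENNReal.one_ne_top)
    rw [hpdef]
    exact h1
  have hpsum1 : ∑' n, p n ≤ 1 := by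
    have h2 : ∑' n, p n = 1 := by
      rw [hpdef, ← ENNReal.tsum_toReal_eq (fun n => measure_ne_top μ _), hηtsum,
        ENNReal.toReal_one]
    linarith
  have hpϰ : 0 < p ϰ := by
    rw [hpdef]
    exact ENNReal.toReal_pos hϰsupp (measure_ne_top μ _)
  have hGanti : Antitone G := by
    intro a b hab
    rw [hGdef0]
    exact ENNReal.toReal_mono (measure_ne_top μ _)
      (measure_mono fun ω h => lt_of_le_of_lt hab h)
  have ha' : ConsistentlyVaryingTail (Fk ϰ) := by
    have : Fk ϰ = fun x => (μ {ω | ξ ϰ ω > x}).toReal := by rw [hFkdef]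
    rw [this]
    exact ha
  have hb' : ∀ k : ℕ, 1 ≤ k → k ≠ ϰ → ConsistentlyVaryingTail (Fk k) ∨
      Tendsto (fun x : ℝ => Fk k x / Fk ϰ x) atTop (nhds 0) := by
    intro k h1 h2
    rcases hb k h1 h2 with h | h
    · left
      have : Fk k = fun x => (μ {ω | ξ k ω > x}).toReal := by rw [hFkdef]
      rw [this]
      exact h
    · right
      have : (fun x : ℝ => Fk k x / Fk ϰ x)
          = fun x : ℝ => (μ {ω | ξ k ω > x}).toReal / (μ {ω | ξ ϰ ω > x}).toReal := by
        rw [hFkdef]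
      rw [this]
      exact h
  have hφη' : Summable (fun n : ℕ => φ (n + 1) * p (n + 1)) := by
    rw [hpdef]
    exact hφη
  -- the constant C is nonnegative and yields eventual sum bounds
  have hφFpos : ∀ n (x : ℝ), 0 < φ n * Fk ϰ x := fun n x => mul_pos (hφpos n) (hϰpos' x)
  have hC0 : 0 ≤ C := by
    obtain ⟨x, hx⟩ := hC.exists
    have h1 := hx 1 le_rfl
    have h2 : 0 ≤ (∑ k ∈ Finset.Icc 1 1, (μ {ω | ξ k ω > x}).toReal)
        / (φ 1 * (μ {ω | ξ ϰ ω > x}).toReal) :=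
      div_nonneg (Finset.sum_nonneg fun k _ => ENNReal.toReal_nonneg)
        (mul_nonneg (hφpos 1).le ENNReal.toReal_nonneg)
    linarith
  have hC' : ∀ᶠ x : ℝ in atTop, ∀ n, 1 ≤ n →
      (∑ k ∈ Finset.Icc 1 n, Fk k x) ≤ C * (φ n * Fk ϰ x) := by
    filter_upwards [hC] with x hx n hn
    have h1 := hx n hn
    have h2 : 0 < φ n * (μ {ω | ξ ϰ ω > x}).toReal := mul_pos (hφpos n) (hϰpos x)
    have h3 := (div_le_iff₀ h2).mp h1
    rw [hFkdef]
    exact h3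
  exact cvar_aux Fk Pn p G ϰ φ C hFk0 hFkanti hϰpos' hPn0 hPnzero hFP hunion hover hp0
    hpsum hpsum1 hpϰ hsummand hGdef hGanti ha' hb' hφpos hφη' hC' hC0
end
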